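/- arXiv:2406.03420 — 6 statements merged into one kernel-verified Lean document; each statement's English description precedes it below -/
import Mathlib

section
/- Let β > 0 and ε > 0. At the parameter value μ = μ_c, the Jacobian matrix of (S) at E₂ = (√(β/ε), 0) has the pair of purely imaginary eigenvalues ±i√(2β). Moreover, for μ₁ < μ < μ₂ the common real part of the two complex-conjugate eigenvalues of the Jacobian at E₂ equals (μ − μ_c)/2, so its derivative with respect to μ is 1/2 > 0 (the transversality condition for the Hopf bifurcation). -/
/-!
At `E₂` one has `x₀² = β/ε`, so the Jacobian has determinant `2β` and trace `μ - μ_c`. Its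
characteristic polynomial `z² - (μ - μ_c) z + 2β` has discriminant `(μ - μ_c)² - 8β`, which vanishes
exactly at `μ₁, μ₂`; in between the roots are `(μ - μ_c)/2 ± iω` with `4ω² = 8β - (μ - μ_c)²`,
and at `μ = μ_c` they are `±i√(2β)`.
-/

set_option linter.unusedVariables false

open Polynomial

/-- The Jacobian matrix of the system (S): x' = y, y' = (μ + x² − x⁴)y + βx − εx³
    at an equilibrium (x₀, 0). -/
def jacobianS (μ β ε x₀ : ℝ) : Matrix (Fin 2) (Fin 2) ℝ :=
  !![0, 1; β - 3 * ε * x₀ ^ 2, μ + x₀ ^ 2 - x₀ ^ 4]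

theorem Matrix.aeval_charpoly_fin_two {R S : Type*} [CommRing R] [Nontrivial R] [CommRing S]
    [Algebra R S] (A : Matrix (Fin 2) (Fin 2) R) (z : S) :
    aeval z A.charpoly = z ^ 2 - algebraMap R S A.trace * z + algebraMap R S A.det := by
  simp [A.charpoly_fin_two]

theorem Complex.sq_sub_mul_add_eq_zero_iff {t d ω : ℝ} (h : t ^ 2 + 4 * ω ^ 2 = 4 * d) (z : ℂ) :
    z ^ 2 - t * z + d = 0 ↔ z = t / 2 + ω * I ∨ z = t / 2 - ω * I := by
  have hd : (d : ℂ) = t ^ 2 / 4 + ω ^ 2 := by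
    apply_fun ((↑) : ℝ → ℂ) at h; push_cast at h; linear_combination -h / 4
  have hfactor : z ^ 2 - t * z + d = (z - (t / 2 + ω * I)) * (z - (t / 2 - ω * I)) := by
    rw [hd]; linear_combination (ω : ℂ) ^ 2 * I_sq
  rw [hfactor, mul_eq_zero, sub_eq_zero, sub_eq_zero]

theorem Complex.re_eq_half_of_sq_sub_mul_add_eq_zero {t d : ℝ} (h : t ^ 2 ≤ 4 * d) {z : ℂ}
    (hz : z ^ 2 - t * z + d = 0) : z.re = t / 2 := by
  have hω : t ^ 2 + 4 * √(d - t ^ 2 / 4) ^ 2 = 4 * d := by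
    rw [Real.sq_sqrt (by linarith)]; ring
  rcases (sq_sub_mul_add_eq_zero_iff hω z).mp hz with rfl | rfl <;> simp

theorem trace_jacobianS (μ β ε x₀ : ℝ) : (jacobianS μ β ε x₀).trace = μ + x₀ ^ 2 - x₀ ^ 4 := by
  simp [jacobianS, Matrix.trace_fin_two]

theorem det_jacobianS (μ β ε x₀ : ℝ) : (jacobianS μ β ε x₀).det = 3 * ε * x₀ ^ 2 - β := by
  simp [jacobianS, Matrix.det_fin_two]

theorem trace_jacobianS_sqrt {β ε : ℝ} (hβ : 0 ≤ β) (hε : 0 < ε) (μ : ℝ) :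
    (jacobianS μ β ε √(β / ε)).trace = μ - (β ^ 2 - ε * β) / ε ^ 2 := by
  have hx₀ : √(β / ε) ^ 4 = (β / ε) ^ 2 := by
    rw [show 4 = 2 * 2 from rfl, pow_mul, Real.sq_sqrt (by positivity)]
  rw [trace_jacobianS, hx₀, Real.sq_sqrt (by positivity)]
  field_simp; ring

theorem det_jacobianS_sqrt {β ε : ℝ} (hβ : 0 ≤ β) (hε : 0 < ε) (μ : ℝ) :
    (jacobianS μ β ε √(β / ε)).det = 2 * β := by
  rw [det_jacobianS, Real.sq_sqrt (by positivity)]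
  field_simp; ring

/-- At μ = μ_c the Jacobian of (S) at E₂ = (√(β/ε), 0) has the purely imaginary
    eigenvalues ±i√(2β) (the roots of its characteristic polynomial over ℂ), and
    for μ₁ < μ < μ₂ the common real part of the two complex-conjugate eigenvalues
    is (μ − μ_c)/2, whose derivative with respect to μ is 1/2 > 0
    (the Hopf transversality condition). -/
theorem hopf_eigenvalues_and_transversality (β ε : ℝ) (hβ : 0 < β) (hε : 0 < ε) :
    let μc : ℝ := (β ^ 2 - ε * β) / ε ^ 2
    let μ₁ : ℝ := μc - 2 * Real.sqrt (2 * β)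
    let μ₂ : ℝ := μc + 2 * Real.sqrt (2 * β)
    (∀ z : ℂ, (Polynomial.aeval z)
        ((jacobianS μc β ε (Real.sqrt (β / ε))).charpoly) = 0 ↔
        z = Complex.I * Real.sqrt (2 * β) ∨ z = -(Complex.I * Real.sqrt (2 * β))) ∧
    (∀ μ : ℝ, μ₁ < μ → μ < μ₂ → ∀ z : ℂ, (Polynomial.aeval z)
        ((jacobianS μ β ε (Real.sqrt (β / ε))).charpoly) = 0 →
        z.re = (μ - μc) / 2) ∧
    (∀ μ : ℝ, HasDerivAt (fun m : ℝ => (m - μc) / 2) (1 / 2) μ) ∧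
    (0 : ℝ) < 1 / 2 := by
  intro μc μ₁ μ₂
  have hcharpoly (μ : ℝ) (z : ℂ) : aeval z (jacobianS μ β ε √(β / ε)).charpoly
      = z ^ 2 - ((μ - μc : ℝ) : ℂ) * z + ((2 * β : ℝ) : ℂ) := by
    rw [Matrix.aeval_charpoly_fin_two, trace_jacobianS_sqrt hβ.le hε,
      det_jacobianS_sqrt hβ.le hε]
    rfl
  refine ⟨fun z => ?_, fun μ h₁ h₂ z hz => ?_, fun μ => ?_, by norm_num⟩
  · have hω : (μc - μc) ^ 2 + 4 * √(2 * β) ^ 2 = 4 * (2 * β) := by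
      rw [sub_self, Real.sq_sqrt (by positivity)]; ring
    rw [hcharpoly, Complex.sq_sub_mul_add_eq_zero_iff hω]
    simp [mul_comm]
  · have hdiscrim : (μ - μc) ^ 2 ≤ 4 * (2 * β) := by
      have h : (μ - μc) ^ 2 < (2 * √(2 * β)) ^ 2 :=
        sq_lt_sq' (by linarith) (by linarith)
      rw [mul_pow, Real.sq_sqrt (by positivity)] at h
      linarith
    exact Complex.re_eq_half_of_sq_sub_mul_add_eq_zero hdiscrim (hcharpoly μ z ▸ hz)
  · simpa using ((hasDerivAt_id μ).sub_const μc).div_const 2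
end

section
/- Let ε > 0, β = 0, μ = 0, and let V(x, y) = (ε/4)x⁴ + (1/2)y². Then along every solution (x, y) of (S) one has (d/dt) V(x(t), y(t)) = x(t)² y(t)² (1 − x(t)²) for all t, and the equilibrium (0,0) is Lyapunov unstable: there exists r > 0 such that for every δ > 0 there is a solution of (S) whose initial value lies within distance δ of (0,0) but which leaves the open ball of radius r around (0,0) at some positive time. -/
set_option linter.unusedVariables false
set_option maxHeartbeats 1000000

noncomputable section UnstableAux
open Set Real

/-- The vector field of system (S) with μ = β = 0. -/
def Fv (ε : ℝ) (p : ℝ × ℝ) : ℝ × ℝ := (p.2, (p.1^2 - p.1^4) * p.2 - ε * p.1^3)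

/-- Clamp a real number to the interval [-K, K]. -/
def clampR (K v : ℝ) : ℝ := max (-K) (min K v)

/-- The cut-off vector field. -/
def FK (ε K : ℝ) (p : ℝ × ℝ) : ℝ × ℝ := Fv ε (clampR K p.1, clampR K p.2)

/-- The Chetaev function U. -/
def Ufun (ε : ℝ) (p : ℝ × ℝ) : ℝ :=
  ε/4 * p.1^4 + 1/2 * p.2^2 + ε/24 * p.1 * p.2^3 - 1/6 * p.1^3 * p.2

/-- The derivative of U along the vector field. -/
def Udot (ε x y : ℝ) : ℝ :=
  x^2*y^2*(1-x^2) + ε/24*(y^4 + 3*x^3*y^3*(1-x^2) - 3*ε*x^4*y^2)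
    - 1/6*(3*x^2*y^2 + x^5*y*(1-x^2) - ε*x^6)


lemma clampR_abs_le {K : ℝ} (hK : 0 ≤ K) (v : ℝ) : |clampR K v| ≤ K := by
  rw [abs_le]
  constructor
  · exact le_max_left _ _
  · exact max_le (by linarith) (min_le_left _ _)

lemma clampR_eq {K v : ℝ} (h : |v| ≤ K) : clampR K v = v := by
  rw [abs_le] at h
  rw [clampR, min_eq_right h.2, max_eq_right h.1]

lemma clampR_lip (K a b : ℝ) : |clampR K a - clampR K b| ≤ |a - b| := by
  calc |clampR K a - clampR K b| ≤ max |(-K) - (-K)| |min K a - min K b| :=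
        abs_max_sub_max_le_max _ _ _ _
    _ ≤ max |(-K) - (-K)| (max |K - K| |a - b|) := by
        exact max_le_max le_rfl (abs_min_sub_min_le_max _ _ _ _)
    _ ≤ |a - b| := by simp [abs_nonneg]

lemma comp_fst {X : ℝ → ℝ × ℝ} {v : ℝ × ℝ} {t : ℝ} (h : HasDerivAt X v t) :
    HasDerivAt (fun s => (X s).1) v.1 t :=
  (ContinuousLinearMap.fst ℝ ℝ ℝ).hasFDerivAt.comp_hasDerivAt t h

lemma comp_snd {X : ℝ → ℝ × ℝ} {v : ℝ × ℝ} {t : ℝ} (h : HasDerivAt X v t) :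
    HasDerivAt (fun s => (X s).2) v.2 t :=
  (ContinuousLinearMap.snd ℝ ℝ ℝ).hasFDerivAt.comp_hasDerivAt t h


lemma abs_pow_le {a K : ℝ} (h : |a| ≤ K) (n : ℕ) : |a^n| ≤ K^n := by
  rw [abs_pow]; exact pow_le_pow_left₀ (abs_nonneg _) h n

lemma FK_lip {ε K : ℝ} (hε : 0 < ε) (hK : 1 ≤ K) :
    LipschitzWith ((8 + 3*ε)*K^4).toNNReal (FK ε K) := by
  have hK0 : (0:ℝ) ≤ K := by linarith
  have hL0 : (0:ℝ) ≤ (8 + 3*ε)*K^4 := by positivity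
  rw [lipschitzWith_iff_dist_le_mul]
  intro p q
  rw [Real.coe_toNNReal _ hL0]
  set x₁ := clampR K p.1 with hx₁d
  set x₂ := clampR K q.1 with hx₂d
  set y₁ := clampR K p.2 with hy₁d
  set y₂ := clampR K q.2 with hy₂d
  have e1' : FK ε K p = (y₁, (x₁^2 - x₁^4) * y₁ - ε * x₁^3) := rfl
  have e2' : FK ε K q = (y₂, (x₂^2 - x₂^4) * y₂ - ε * x₂^3) := rfl
  have bx₁ : |x₁| ≤ K := clampR_abs_le hK0 _
  have bx₂ : |x₂| ≤ K := clampR_abs_le hK0 _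
  have by₁ : |y₁| ≤ K := clampR_abs_le hK0 _
  have by₂ : |y₂| ≤ K := clampR_abs_le hK0 _
  have hdx : |x₁ - x₂| ≤ dist p q := by
    refine (clampR_lip K p.1 q.1).trans ?_
    rw [Prod.dist_eq]
    exact le_max_of_le_left (le_of_eq (Real.dist_eq p.1 q.1).symm)
  have hdy : |y₁ - y₂| ≤ dist p q := by
    refine (clampR_lip K p.2 q.2).trans ?_
    rw [Prod.dist_eq]
    exact le_max_of_le_right (le_of_eq (Real.dist_eq p.2 q.2).symm)
  have hd0 : 0 ≤ dist p q := dist_nonneg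
  clear_value x₁ x₂ y₁ y₂
  have hKp : K^2 ≤ K^4 := pow_le_pow_right₀ hK (by norm_num)
  have hKp3 : K^3 ≤ K^4 := pow_le_pow_right₀ hK (by norm_num)
  have hK4 : (1:ℝ) ≤ K^4 := one_le_pow₀ hK
  rw [Prod.dist_eq]
  apply max_le
  · show dist (FK ε K p).1 (FK ε K q).1 ≤ _
    rw [e1', e2', Real.dist_eq]
    have h9 : (1:ℝ) ≤ (8 + 3*ε)*K^4 := by nlinarith
    have := le_mul_of_one_le_left hd0 h9
    simpa using hdy.trans this
  · show dist (FK ε K p).2 (FK ε K q).2 ≤ _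
    rw [e1', e2', Real.dist_eq]
    set S3 : ℝ := x₁^3+x₁^2*x₂+x₁*x₂^2+x₂^3 with hS3d
    set S2 : ℝ := x₁^2+x₁*x₂+x₂^2 with hS2d
    set C : ℝ := y₂*((x₁+x₂) - S3) - ε*S2 with hCd
    have key : (x₁^2 - x₁^4) * y₁ - ε * x₁^3 - ((x₂^2 - x₂^4) * y₂ - ε * x₂^3)
        = (x₁^2 - x₁^4) * (y₁ - y₂) + C * (x₁ - x₂) := by
      rw [hCd, hS3d, hS2d]; ring
    rw [key]
    have hx₁2 : |x₁^2| ≤ K^2 := abs_pow_le bx₁ 2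
    have hx₁4 : |x₁^4| ≤ K^4 := abs_pow_le bx₁ 4
    have hA : |x₁^2 - x₁^4| ≤ 2*K^4 := by
      refine (abs_sub _ _).trans ?_
      linarith
    have hS3 : |S3| ≤ 4*K^3 := by
      have q1 : |x₁^3| ≤ K^3 := abs_pow_le bx₁ 3
      have q2 : |x₁^2*x₂| ≤ K^3 := by
        rw [abs_mul]
        calc |x₁^2| * |x₂| ≤ K^2 * K :=
              mul_le_mul hx₁2 bx₂ (abs_nonneg _) (by positivity)
          _ = K^3 := by ring
      have q3 : |x₁*x₂^2| ≤ K^3 := by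
        rw [abs_mul]
        calc |x₁| * |x₂^2| ≤ K * K^2 :=
              mul_le_mul bx₁ (abs_pow_le bx₂ 2) (abs_nonneg _) hK0
          _ = K^3 := by ring
      have q4 : |x₂^3| ≤ K^3 := abs_pow_le bx₂ 3
      calc |S3| ≤ |x₁^3+x₁^2*x₂+x₁*x₂^2| + |x₂^3| := abs_add_le _ _
        _ ≤ |x₁^3+x₁^2*x₂| + |x₁*x₂^2| + |x₂^3| := by
            linarith [abs_add_le (x₁^3+x₁^2*x₂) (x₁*x₂^2)]
        _ ≤ |x₁^3| + |x₁^2*x₂| + |x₁*x₂^2| + |x₂^3| := by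
            linarith [abs_add_le (x₁^3) (x₁^2*x₂)]
        _ ≤ 4*K^3 := by linarith
    have hS2 : |S2| ≤ 3*K^2 := by
      have q1 : |x₁^2| ≤ K^2 := hx₁2
      have q2 : |x₁*x₂| ≤ K^2 := by
        rw [abs_mul]
        calc |x₁| * |x₂| ≤ K * K := mul_le_mul bx₁ bx₂ (abs_nonneg _) hK0
          _ = K^2 := by ring
      have q3 : |x₂^2| ≤ K^2 := abs_pow_le bx₂ 2
      calc |S2| ≤ |x₁^2+x₁*x₂| + |x₂^2| := abs_add_le _ _
        _ ≤ |x₁^2| + |x₁*x₂| + |x₂^2| := by linarith [abs_add_le (x₁^2) (x₁*x₂)]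
        _ ≤ 3*K^2 := by linarith
    have hC : |C| ≤ (6+3*ε)*K^4 := by
      have t1 : |x₁+x₂| ≤ 2*K := (abs_add_le _ _).trans (by linarith)
      have t2 : |(x₁+x₂) - S3| ≤ 2*K + 4*K^3 := (abs_sub _ _).trans (by linarith)
      have t3 : |y₂*((x₁+x₂) - S3)| ≤ K*(2*K+4*K^3) := by
        rw [abs_mul]
        exact mul_le_mul by₂ t2 (abs_nonneg _) hK0
      have t4 : |ε*S2| ≤ ε*(3*K^2) := by
        rw [abs_mul, abs_of_pos hε]
        exact mul_le_mul_of_nonneg_left hS2 hε.le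
      have t5 : |C| ≤ K*(2*K+4*K^3) + ε*(3*K^2) := (abs_sub _ _).trans (by linarith)
      have t6 : K*(2*K+4*K^3) ≤ 6*K^4 := by nlinarith
      have t7 : ε*(3*K^2) ≤ 3*ε*K^4 := by nlinarith [mul_le_mul_of_nonneg_left hKp (by linarith : (0:ℝ) ≤ 3*ε)]
      calc |C| ≤ K*(2*K+4*K^3) + ε*(3*K^2) := t5
        _ ≤ 6*K^4 + 3*ε*K^4 := by linarith
        _ = (6+3*ε)*K^4 := by ring
    have m1 : |(x₁^2 - x₁^4) * (y₁ - y₂)| ≤ (2*K^4) * dist p q := by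
      rw [abs_mul]
      exact mul_le_mul hA hdy (abs_nonneg _) (by positivity)
    have m2 : |C * (x₁ - x₂)| ≤ ((6+3*ε)*K^4) * dist p q := by
      rw [abs_mul]
      exact mul_le_mul hC hdx (abs_nonneg _) (by positivity)
    calc |(x₁^2 - x₁^4) * (y₁ - y₂) + C * (x₁ - x₂)|
        ≤ |(x₁^2 - x₁^4) * (y₁ - y₂)| + |C * (x₁ - x₂)| := abs_add_le _ _
      _ ≤ (2*K^4) * dist p q + ((6+3*ε)*K^4) * dist p q := by linarith
      _ = (8 + 3*ε)*K^4 * dist p q := by ring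

lemma FK_norm_le {ε K : ℝ} (hε : 0 < ε) (hK : 1 ≤ K) (p : ℝ × ℝ) :
    ‖FK ε K p‖ ≤ (3+ε)*K^5 := by
  have hK0 : (0:ℝ) ≤ K := by linarith
  set x := clampR K p.1 with hxd
  set y := clampR K p.2 with hyd
  have e1' : FK ε K p = (y, (x^2 - x^4) * y - ε * x^3) := rfl
  have bx : |x| ≤ K := clampR_abs_le hK0 _
  have by' : |y| ≤ K := clampR_abs_le hK0 _
  have hx2 : |x^2| ≤ K^2 := abs_pow_le bx 2
  have hx4 : |x^4| ≤ K^4 := abs_pow_le bx 4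
  have hx3 : |x^3| ≤ K^3 := abs_pow_le bx 3
  have hK5 : (1:ℝ) ≤ K^5 := one_le_pow₀ hK
  have hKp : K^3 ≤ K^5 := pow_le_pow_right₀ hK (by norm_num)
  have hKp2 : K^2 ≤ K^5 := pow_le_pow_right₀ hK (by norm_num)
  have hKp4 : K^4 ≤ K^5 := pow_le_pow_right₀ hK (by norm_num)
  clear_value x y
  rw [e1', Prod.norm_def]
  apply max_le
  · show ‖y‖ ≤ _
    rw [Real.norm_eq_abs]
    nlinarith
  · show ‖(x^2 - x^4)*y - ε*x^3‖ ≤ _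
    rw [Real.norm_eq_abs]
    have hA : |x^2 - x^4| ≤ K^2 + K^4 := (abs_sub _ _).trans (by linarith)
    have t1 : |(x^2 - x^4)*y| ≤ (K^2+K^4)*K := by
      rw [abs_mul]; exact mul_le_mul hA by' (abs_nonneg _) (by positivity)
    have t2 : |ε*x^3| ≤ ε*K^3 := by
      rw [abs_mul, abs_of_pos hε]; exact mul_le_mul_of_nonneg_left hx3 hε.le
    have t3 : |(x^2 - x^4)*y - ε*x^3| ≤ (K^2+K^4)*K + ε*K^3 := (abs_sub _ _).trans (by linarith)
    have t4 : (K^2+K^4)*K ≤ 3*K^5 := by nlinarith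
    have t5 : ε*K^3 ≤ ε*K^5 := mul_le_mul_of_nonneg_left hKp hε.le
    calc |(x^2 - x^4)*y - ε*x^3| ≤ (K^2+K^4)*K + ε*K^3 := t3
      _ ≤ 3*K^5 + ε*K^5 := by linarith
      _ = (3+ε)*K^5 := by ring

/-! ### Derivatives of V and U along solutions -/

lemma hasDerivAt_V_comp {ε : ℝ} {g : ℝ → ℝ × ℝ} {t : ℝ} (hg : HasDerivAt g (Fv ε (g t)) t) :
    HasDerivAt (fun s => ε/4 * ((g s).1)^4 + 1/2 * ((g s).2)^2)
      (((g t).1)^2 * ((g t).2)^2 * (1 - ((g t).1)^2)) t := by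
  have hx := comp_fst hg
  have hy := comp_snd hg
  have h1 := ((hx.pow 4).const_mul (ε/4)).add ((hy.pow 2).const_mul (1/2 : ℝ))
  refine h1.congr_deriv (Eq.symm ?_)
  show _ = ε/4 * ((4:ℕ) * ((g t).1)^(4-1) * (Fv ε (g t)).1) + 1/2 * ((2:ℕ) * ((g t).2)^(2-1) * (Fv ε (g t)).2)
  simp only [Fv]
  push_cast
  ring

lemma hasDerivAt_U_comp {ε : ℝ} {g : ℝ → ℝ × ℝ} {t : ℝ} (hg : HasDerivAt g (Fv ε (g t)) t) :
    HasDerivAt (fun s => Ufun ε (g s)) (Udot ε ((g t).1) ((g t).2)) t := by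
  have hx := comp_fst hg
  have hy := comp_snd hg
  have h1 := ((((hx.pow 4).const_mul (ε/4)).add ((hy.pow 2).const_mul (1/2 : ℝ))).add
      (((hx.mul (hy.pow 3))).const_mul (ε/24))).sub ((((hx.pow 3)).mul hy).const_mul (1/6 : ℝ))
  have heq : (fun s => Ufun ε (g s))
      = fun s => (ε/4 * ((g s).1)^4 + 1/2 * ((g s).2)^2) + ε/24 * ((g s).1 * ((g s).2)^3)
          - 1/6 * (((g s).1)^3 * (g s).2) := by
    funext s; simp only [Ufun]; ring
  rw [heq]
  refine h1.congr_deriv (Eq.symm ?_)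
  show Udot ε ((g t).1) ((g t).2) = _
  simp only [Fv, Udot, Pi.pow_apply]
  push_cast
  ring

/-! ### Existence of solutions for the cut-off field -/

lemma exists_cutoff_sol (ε K n c : ℝ) (hε : 0 < ε) (hK : 1 ≤ K) (hn : 0 < n) :
    ∃ g : ℝ → ℝ × ℝ, g 0 = (0, c) ∧ ∀ t ∈ Ioo (-n) n, HasDerivAt g (FK ε K (g t)) t := by
  have hn0 : (0:ℝ) ∈ Icc (-n) n := ⟨by linarith, by linarith⟩
  have hpl : IsPicardLindelof (fun _ p => FK ε K p) (⟨0, hn0⟩ : Icc (-n) n) ((0:ℝ), c)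
      ((3+ε)*K^5*n).toNNReal 0 ((3+ε)*K^5).toNNReal ((8 + 3*ε)*K^4).toNNReal :=
    IsPicardLindelof.of_time_independent
      (fun x _ => by rw [Real.coe_toNNReal _ (by positivity)]; exact FK_norm_le hε hK x)
      (FK_lip hε hK).lipschitzOnWith
      (by
        have : max (n - 0) (0 - -n) = n := by
          rw [max_eq_left] <;> linarith
        dsimp only
        rw [this, Real.coe_toNNReal _ (by positivity), Real.coe_toNNReal _ (by positivity)]
        simp)
  obtain ⟨f, hf0, hf⟩ := hpl.exists_eq_forall_mem_Icc_hasDerivWithinAt₀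
  exact ⟨f, hf0, fun t ht => (hf t (Ioo_subset_Icc_self ht)).hasDerivAt (Icc_mem_nhds ht.1 ht.2)⟩
lemma FK_eq_Fv {ε K : ℝ} {p : ℝ × ℝ} (h : ‖p‖ ≤ K) : FK ε K p = Fv ε p := by
  have h1 : |p.1| ≤ K := (norm_fst_le p).trans h
  have h2 : |p.2| ≤ K := (norm_snd_le p).trans h
  show Fv ε (clampR K p.1, clampR K p.2) = Fv ε p
  rw [clampR_eq h1, clampR_eq h2]

lemma norm_pair_le {a b K : ℝ} (h1 : |a| ≤ K) (h2 : |b| ≤ K) : ‖((a,b) : ℝ × ℝ)‖ ≤ K :=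
  max_le h1 h2

lemma norm_le_of_abs {p : ℝ × ℝ} {K : ℝ} (h1 : |p.1| ≤ K) (h2 : |p.2| ≤ K) : ‖p‖ ≤ K :=
  max_le h1 h2

lemma abs_le_of_pow4 {a M : ℝ} (hM : 1 ≤ M) (h : a^4 ≤ M) : |a| ≤ M := by
  rcases le_or_gt (|a|) 1 with h1 | h1
  · linarith
  · have h2 : |a| ≤ |a|^4 := le_self_pow₀ h1.le (by norm_num)
    have h4 : |a|^4 = a^4 := by rw [← abs_pow, abs_of_nonneg (by positivity : (0:ℝ) ≤ a^4)]
    rw [h4] at h2; linarith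

lemma abs_le_of_sq {a M : ℝ} (hM : 1 ≤ M) (h : a^2 ≤ M) : |a| ≤ M := by
  rcases le_or_gt (|a|) 1 with h1 | h1
  · linarith
  · have h2 : |a| ≤ |a|^2 := le_self_pow₀ h1.le (by norm_num)
    have h4 : |a|^2 = a^2 := by rw [← abs_pow, abs_of_nonneg (by positivity : (0:ℝ) ≤ a^2)]
    rw [h4] at h2; linarith

lemma abs_le_half_of_pow4 {a : ℝ} (h : a^4 ≤ 1/16) : |a| ≤ 1/2 := by
  by_contra hcc
  push_neg at hcc
  have h1 : (1/2:ℝ)^4 < |a|^4 := by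
    apply pow_lt_pow_left₀ hcc (by norm_num) (by norm_num)
  have h4 : |a|^4 = a^4 := by rw [← abs_pow, abs_of_nonneg (by positivity : (0:ℝ) ≤ a^4)]
  rw [h4] at h1; norm_num at h1; linarith

lemma abs_le_half_of_sq {a : ℝ} (h : a^2 ≤ 1/4) : |a| ≤ 1/2 := by
  by_contra hcc
  push_neg at hcc
  have h1 : (1/2:ℝ)^2 < |a|^2 := by
    apply pow_lt_pow_left₀ hcc (by norm_num) (by norm_num)
  have h4 : |a|^2 = a^2 := by rw [← abs_pow, abs_of_nonneg (by positivity : (0:ℝ) ≤ a^2)]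
  rw [h4] at h1; norm_num at h1; linarith

/-- Solution of the true system on `[-n, n]`, with small initial data `(0, c)`. -/
lemma exists_true_sol (ε c n : ℝ) (hε : 0 < ε) (hc : 0 < c) (hc1 : c ≤ 1/2)
    (hc2 : c^2 ≤ ε/32) (hn : 1 ≤ n) :
    ∃ f : ℝ → ℝ × ℝ, f 0 = (0, c) ∧
      (∀ t ∈ Icc (-n) n, HasDerivAt f (Fv ε (f t)) t) ∧
      (∃ K : ℝ, 1 ≤ K ∧ ∀ t ∈ Icc (-n) n, ‖f t‖ ≤ K) := by
  set Vm : ℝ := c^2/2 * Real.exp n with hVmd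
  have hVm0 : 0 < Vm := by positivity
  set B : ℝ := 4 + 4*Vm/ε + 2*Vm with hBd
  have hBaux1 : 0 ≤ 4*Vm/ε := by positivity
  have hBaux2 : 0 ≤ 2*Vm := by positivity
  have hB4 : 4 ≤ B := by simp only [hBd]; linarith
  have hK1 : (1:ℝ) ≤ B + 1 := by linarith
  obtain ⟨g, hg0, hgd⟩ := exists_cutoff_sol ε (B+1) (n+1) c hε hK1 (by linarith)
  have hsub : ∀ t, t ∈ Icc (-n) n → t ∈ Ioo (-(n+1)) (n+1) := by
    intro t ht; exact ⟨by linarith [ht.1], by linarith [ht.2]⟩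
  have hgc : ∀ t ∈ Icc (-n) n, ContinuousAt g t :=
    fun t ht => (hgd t (hsub t ht)).continuousAt
  set V : (ℝ × ℝ) → ℝ := fun p => ε/4 * p.1^4 + 1/2 * p.2^2 with hVd
  have hVcont : Continuous V := by fun_prop
  have hV00 : V (g 0) = c^2/2 := by rw [hg0]; show ε/4 * 0^4 + 1/2*c^2 = c^2/2; ring
  have hVnonneg : ∀ p : ℝ × ℝ, 0 ≤ V p := by intro p; have := sq_nonneg p.1; positivity
  have hVder : ∀ s, s ∈ Ioo (-(n+1)) (n+1) → ‖g s‖ ≤ B + 1 →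
      HasDerivAt (fun u => V (g u))
        (((g s).1)^2 * ((g s).2)^2 * (1 - ((g s).1)^2)) s := by
    intro s hs hB'
    have h1 : HasDerivAt g (Fv ε (g s)) s := by
      have := hgd s hs; rwa [FK_eq_Fv hB'] at this
    exact hasDerivAt_V_comp h1
  ------------------------------------------------------------------
  -- Backward claim : on [-n, 0] the solution stays in the ball of radius 3/4
  ------------------------------------------------------------------
  have hback : ∀ t ∈ Icc (-n) (0:ℝ), ‖g t‖ ≤ 3/4 := by
    by_contra hcon
    push_neg at hcon
    obtain ⟨t₁, ht₁, ht₁n⟩ := hcon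
    set N : Set ℝ := {t ∈ Icc (-n) (0:ℝ) | 3/4 ≤ ‖g t‖} with hNd
    have hNne : N.Nonempty := ⟨t₁, ht₁, ht₁n.le⟩
    have hNsub : N ⊆ Icc (-n) 0 := fun t ht => ht.1
    have hNbdd : BddAbove N := BddAbove.mono hNsub bddAbove_Icc
    have hNclosed : IsClosed N := by
      have hcont : ContinuousOn (fun t => ‖g t‖) (Icc (-n) (0:ℝ)) := fun s hs =>
        ((hgc s ⟨hs.1, le_trans hs.2 (by linarith)⟩).norm).continuousWithinAt
      have hNeq : N = Icc (-n) (0:ℝ) ∩ (fun t => ‖g t‖) ⁻¹' (Ici (3/4)) := by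
        ext t; constructor
        · rintro ⟨h1, h2⟩; exact ⟨h1, h2⟩
        · rintro ⟨h1, h2⟩; exact ⟨h1, h2⟩
      rw [hNeq]
      exact hcont.preimage_isClosed_of_isClosed isClosed_Icc isClosed_Ici
    set τ := sSup N with hτd
    have hτN : τ ∈ N := hNclosed.csSup_mem hNne hNbdd
    have hτmem : τ ∈ Icc (-n) (0:ℝ) := hτN.1
    have hτnorm : 3/4 ≤ ‖g τ‖ := hτN.2
    have hafter : ∀ s, τ < s → s ≤ 0 → ‖g s‖ < 3/4 := by
      intro s hs1 hs2
      by_contra hcc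
      push_neg at hcc
      have hsN : s ∈ N := ⟨⟨by linarith [hτmem.1], hs2⟩, hcc⟩
      exact absurd (le_csSup hNbdd hsN) (by linarith)
    have hmono : MonotoneOn (fun u => V (g u)) (Icc τ 0) := by
      apply monotoneOn_of_deriv_nonneg (convex_Icc _ _)
      · intro s hs
        exact (hVcont.continuousAt.comp
          (hgc s ⟨le_trans hτmem.1 hs.1, le_trans hs.2 (by linarith)⟩)).continuousWithinAt
      · intro s hs
        rw [interior_Icc] at hs
        have hb : ‖g s‖ ≤ B + 1 := le_trans (hafter s hs.1 hs.2.le).le (by linarith)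
        exact (hVder s (hsub s ⟨le_trans hτmem.1 hs.1.le, le_trans hs.2.le (by linarith)⟩)
          hb).differentiableAt.differentiableWithinAt
      · intro s hs
        rw [interior_Icc] at hs
        have hsmall : ‖g s‖ < 3/4 := hafter s hs.1 hs.2.le
        have hb : ‖g s‖ ≤ B + 1 := le_trans hsmall.le (by linarith)
        rw [(hVder s (hsub s ⟨le_trans hτmem.1 hs.1.le, le_trans hs.2.le (by linarith)⟩) hb).deriv]
        have hx : |(g s).1| ≤ 3/4 := (norm_fst_le _).trans hsmall.le
        have hx2 : ((g s).1)^2 ≤ 1 := by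
          have := abs_le.mp hx; nlinarith
        have h1 : (0:ℝ) ≤ ((g s).1)^2 * ((g s).2)^2 :=
          mul_nonneg (sq_nonneg _) (sq_nonneg _)
        nlinarith
    have hVτ : V (g τ) ≤ c^2/2 := by
      have h' : V (g τ) ≤ V (g 0) :=
        hmono (⟨le_rfl, hτmem.2⟩ : τ ∈ Icc τ 0) (⟨hτmem.2, le_rfl⟩ : (0:ℝ) ∈ Icc τ 0) hτmem.2
      rwa [hV00] at h'
    -- deduce that g τ is small
    have hX4 : ((g τ).1)^4 ≤ 1/16 := by
      have h1 : ε/4 * ((g τ).1)^4 ≤ c^2/2 := by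
        have := sq_nonneg ((g τ).2)
        simp only [hVd] at hVτ; linarith
      have hpos : (0:ℝ) < ε/4 := by positivity
      have h2 : ε/4 * ((g τ).1)^4 ≤ ε/4 * (1/16) := by
        have : c^2/2 ≤ ε/64 := by linarith
        have : ε/4 * (1/16) = ε/64 := by ring
        linarith
      exact (mul_le_mul_iff_right₀ hpos).mp h2
    have hY2 : ((g τ).2)^2 ≤ 1/4 := by
      have h1 : 1/2 * ((g τ).2)^2 ≤ c^2/2 := by
        have : (0:ℝ) ≤ ε/4 * ((g τ).1)^4 := by positivity
        simp only [hVd] at hVτ; linarith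
      nlinarith
    have : ‖g τ‖ ≤ 1/2 :=
      norm_le_of_abs (abs_le_half_of_pow4 hX4) (abs_le_half_of_sq hY2)
    linarith
  ------------------------------------------------------------------
  -- Forward claim : on [0, n] the solution stays in the ball of radius B
  ------------------------------------------------------------------
  have hfwd : ∀ t ∈ Icc (0:ℝ) n, ‖g t‖ ≤ B := by
    by_contra hcon
    push_neg at hcon
    obtain ⟨t₁, ht₁, ht₁n⟩ := hcon
    set N : Set ℝ := {t ∈ Icc (0:ℝ) n | B ≤ ‖g t‖} with hNd
    have hNne : N.Nonempty := ⟨t₁, ht₁, ht₁n.le⟩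
    have hNsub : N ⊆ Icc 0 n := fun t ht => ht.1
    have hNbdd : BddBelow N := BddBelow.mono hNsub bddBelow_Icc
    have hNclosed : IsClosed N := by
      have hcont : ContinuousOn (fun t => ‖g t‖) (Icc (0:ℝ) n) := fun s hs =>
        ((hgc s ⟨le_trans (by linarith) hs.1, hs.2⟩).norm).continuousWithinAt
      have hNeq : N = Icc (0:ℝ) n ∩ (fun t => ‖g t‖) ⁻¹' (Ici B) := by
        ext t; constructor
        · rintro ⟨h1, h2⟩; exact ⟨h1, h2⟩
        · rintro ⟨h1, h2⟩; exact ⟨h1, h2⟩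
      rw [hNeq]
      exact hcont.preimage_isClosed_of_isClosed isClosed_Icc isClosed_Ici
    set τ := sInf N with hτd
    have hτN : τ ∈ N := hNclosed.csInf_mem hNne hNbdd
    have hτmem : τ ∈ Icc (0:ℝ) n := hτN.1
    have hτnorm : B ≤ ‖g τ‖ := hτN.2
    have hbefore : ∀ s, 0 ≤ s → s < τ → ‖g s‖ < B := by
      intro s hs1 hs2
      by_contra hcc
      push_neg at hcc
      have hsN : s ∈ N := ⟨⟨hs1, by linarith [hτmem.2]⟩, hcc⟩
      exact absurd (csInf_le hNbdd hsN) (by linarith)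
    -- the auxiliary function φ = V ∘ g · exp(-·) is antitone on [0, τ]
    set φ : ℝ → ℝ := fun u => V (g u) * Real.exp (-u) with hφd
    have hφmono : AntitoneOn φ (Icc 0 τ) := by
      apply antitoneOn_of_deriv_nonpos (convex_Icc _ _)
      · intro s hs
        apply ContinuousWithinAt.mul
        · exact (hVcont.continuousAt.comp
            (hgc s ⟨le_trans (by linarith : -n ≤ (0:ℝ)) hs.1, le_trans hs.2 hτmem.2⟩)).continuousWithinAt
        · exact (Real.continuous_exp.comp continuous_neg).continuousAt.continuousWithinAt
      · intro s hs
        rw [interior_Icc] at hs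
        have hb : ‖g s‖ ≤ B + 1 := le_trans (hbefore s hs.1.le hs.2).le (by linarith)
        have h1 := hVder s (hsub s ⟨le_trans (by linarith) hs.1.le, le_trans hs.2.le hτmem.2⟩) hb
        have h2 : HasDerivAt (fun u : ℝ => Real.exp (-u)) (Real.exp (-s) * (-1)) s :=
          (Real.hasDerivAt_exp (-s)).comp s (hasDerivAt_neg s)
        exact (h1.mul h2).differentiableAt.differentiableWithinAt
      · intro s hs
        rw [interior_Icc] at hs
        have hsmall : ‖g s‖ < B := hbefore s hs.1.le hs.2
        have hb : ‖g s‖ ≤ B + 1 := le_trans hsmall.le (by linarith)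
        have h1 := hVder s (hsub s ⟨le_trans (by linarith) hs.1.le, le_trans hs.2.le hτmem.2⟩) hb
        have h2 : HasDerivAt (fun u : ℝ => Real.exp (-u)) (Real.exp (-s) * (-1)) s :=
          (Real.hasDerivAt_exp (-s)).comp s (hasDerivAt_neg s)
        rw [show deriv φ s = _ from (h1.mul h2).deriv]
        -- show the derivative is ≤ 0
        set X := (g s).1
        set Y := (g s).2
        have hVdotle : X^2*Y^2*(1-X^2) ≤ V (g s) := by
          show X^2*Y^2*(1-X^2) ≤ ε/4 * X^4 + 1/2*Y^2
          nlinarith [mul_nonneg (sq_nonneg Y) (sq_nonneg (X^2 - 1/2)),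
            mul_nonneg (mul_nonneg hε.le (sq_nonneg X)) (sq_nonneg X), sq_nonneg Y]
        have hexp : (0:ℝ) < Real.exp (-s) := Real.exp_pos _
        have hkey : (X^2*Y^2*(1-X^2) - V (g s)) * Real.exp (-s) ≤ 0 :=
          mul_nonpos_of_nonpos_of_nonneg (by linarith) hexp.le
        nlinarith [hkey]
    -- hence V (g τ) ≤ Vm
    have hφτ : φ τ ≤ c^2/2 := by
      have h0m : (0:ℝ) ∈ Icc (0:ℝ) τ := ⟨le_rfl, hτmem.1⟩
      have hτm : τ ∈ Icc (0:ℝ) τ := ⟨hτmem.1, le_rfl⟩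
      have h' : V (g τ) * Real.exp (-τ) ≤ V (g 0) * Real.exp (-0) := hφmono h0m hτm hτmem.1
      rw [hV00, neg_zero, Real.exp_zero, mul_one] at h'
      exact h'
    have hVτ : V (g τ) ≤ Vm := by
      have hexpτ : V (g τ) = φ τ * Real.exp τ := by
        simp only [hφd]
        rw [mul_assoc, ← Real.exp_add]
        simp
      rw [hexpτ, hVmd]
      have h1 : (0:ℝ) ≤ Real.exp τ := (Real.exp_pos τ).le
      have h2 : Real.exp τ ≤ Real.exp n := Real.exp_le_exp.mpr hτmem.2
      have h3 : 0 ≤ φ τ := by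
        by_contra hcc
        push_neg at hcc
        have : φ τ * Real.exp τ < 0 := mul_neg_of_neg_of_pos hcc (Real.exp_pos τ)
        have := hVnonneg (g τ)
        rw [hexpτ] at this; linarith
      calc φ τ * Real.exp τ ≤ (c^2/2) * Real.exp n := by
            apply mul_le_mul hφτ h2 h1 (by positivity)
        _ = c^2/2 * Real.exp n := by ring
    -- deduce ‖g τ‖ ≤ B - 3 < B : contradiction
    have hX4 : ((g τ).1)^4 ≤ 4*Vm/ε := by
      have h1 : ε/4 * ((g τ).1)^4 ≤ Vm := by
        have := sq_nonneg ((g τ).2)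
        simp only [hVd] at hVτ; linarith
      have hpos : (0:ℝ) < ε/4 := by positivity
      have hid : Vm = ε/4 * (4*Vm/ε) := by field_simp
      have h2 : ε/4 * ((g τ).1)^4 ≤ ε/4 * (4*Vm/ε) := by rw [← hid]; exact h1
      exact (mul_le_mul_iff_right₀ hpos).mp h2
    have hY2 : ((g τ).2)^2 ≤ 2*Vm := by
      have h1 : 1/2 * ((g τ).2)^2 ≤ Vm := by
        have : (0:ℝ) ≤ ε/4 * ((g τ).1)^4 := by positivity
        simp only [hVd] at hVτ; linarith
      linarith
    have hBm3 : (1:ℝ) ≤ B - 3 := by simp only [hBd]; linarith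
    have hXB : |(g τ).1| ≤ B - 3 := by
      apply abs_le_of_pow4 hBm3
      refine hX4.trans ?_
      simp only [hBd]; linarith
    have hYB : |(g τ).2| ≤ B - 3 := by
      apply abs_le_of_sq hBm3
      refine hY2.trans ?_
      simp only [hBd]; linarith
    have : ‖g τ‖ ≤ B - 3 := norm_le_of_abs hXB hYB
    linarith
  ------------------------------------------------------------------
  -- conclusion
  ------------------------------------------------------------------
  have hbound : ∀ t ∈ Icc (-n) n, ‖g t‖ ≤ B := by
    intro t ht
    rcases le_or_gt t 0 with h | h
    · exact (hback t ⟨ht.1, h⟩).trans (by linarith)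
    · exact hfwd t ⟨h.le, ht.2⟩
  refine ⟨g, hg0, ?_, ⟨B, by linarith, hbound⟩⟩
  intro t ht
  have h1 := hgd t (hsub t ht)
  rwa [FK_eq_Fv ((hbound t ht).trans (by linarith))] at h1

lemma Fv_lipOn {ε R : ℝ} (hε : 0 < ε) (hR : 1 ≤ R) :
    LipschitzOnWith ((8 + 3*ε)*R^4).toNNReal (Fv ε) (Metric.closedBall (0 : ℝ × ℝ) R) := by
  intro p hp q hq
  have h1 := FK_lip hε hR (K := R) p q
  rw [FK_eq_Fv (mem_closedBall_zero_iff.mp hp), FK_eq_Fv (mem_closedBall_zero_iff.mp hq)] at h1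
  exact h1

/-- Global solution of the true system on all of ℝ. -/
lemma exists_global_sol (ε c : ℝ) (hε : 0 < ε) (hc : 0 < c) (hc1 : c ≤ 1/2)
    (hc2 : c^2 ≤ ε/32) :
    ∃ X : ℝ → ℝ × ℝ, X 0 = (0, c) ∧ ∀ t, HasDerivAt X (Fv ε (X t)) t := by
  have hex : ∀ n : ℕ, ∃ f : ℝ → ℝ × ℝ, f 0 = (0, c) ∧
      (∀ t ∈ Icc (-(n+1:ℝ)) (n+1), HasDerivAt f (Fv ε (f t)) t) ∧
      (∃ K : ℝ, 1 ≤ K ∧ ∀ t ∈ Icc (-(n+1:ℝ)) (n+1), ‖f t‖ ≤ K) := by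
    intro n
    exact exists_true_sol ε c (n+1) hε hc hc1 hc2 (by
      have : (0:ℝ) ≤ n := Nat.cast_nonneg n
      linarith)
  choose sol h0 hder hK using hex
  choose Kb hK1 hbd using hK
  -- uniqueness of solutions on common intervals
  have huniq : ∀ m k : ℕ, m ≤ k → EqOn (sol m) (sol k) (Icc (-(m+1:ℝ)) (m+1)) := by
    intro m k hmk
    have hmk' : ((m:ℝ)+1) ≤ (k:ℝ)+1 := by
      have : (m:ℝ) ≤ k := Nat.cast_le.mpr hmk
      linarith
    set R := max (Kb m) (Kb k) with hRd
    have hR1 : (1:ℝ) ≤ R := le_trans (hK1 m) (le_max_left _ _)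
    have hsubm : Icc (-(m+1:ℝ)) (m+1) ⊆ Icc (-(k+1:ℝ)) (k+1) :=
      Icc_subset_Icc (by linarith) hmk'
    have h0m : (0:ℝ) ∈ Ioo (-(m+1:ℝ)) (m+1) := by
      constructor
      · have : (0:ℝ) ≤ m := Nat.cast_nonneg m
        linarith
      · have : (0:ℝ) ≤ m := Nat.cast_nonneg m
        linarith
    apply ODE_solution_unique_of_mem_Icc
      (v := fun _ p => Fv ε p) (s := fun _ => Metric.closedBall (0 : ℝ × ℝ) R)
      (fun _ _ => Fv_lipOn hε hR1) h0m
    · exact fun t ht => (hder m t ht).continuousAt.continuousWithinAt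
    · exact fun t ht => hder m t (Ioo_subset_Icc_self ht)
    · intro t ht
      exact mem_closedBall_zero_iff.mpr
        ((hbd m t (Ioo_subset_Icc_self ht)).trans (le_max_left _ _))
    · exact fun t ht => (hder k t (hsubm ht)).continuousAt.continuousWithinAt
    · exact fun t ht => hder k t (hsubm (Ioo_subset_Icc_self ht))
    · intro t ht
      exact mem_closedBall_zero_iff.mpr
        ((hbd k t (hsubm (Ioo_subset_Icc_self ht))).trans (le_max_right _ _))
    · rw [h0 m, h0 k]
  have hmem : ∀ (t : ℝ) (n : ℕ), |t| ≤ n → t ∈ Icc (-(n+1:ℝ)) (n+1) := by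
    intro t n ht
    have := abs_le.mp ht
    exact ⟨by linarith [this.1], by linarith [this.2]⟩
  set X : ℝ → ℝ × ℝ := fun t => sol ⌈|t|⌉₊ t with hXd
  have hXeq : ∀ (n : ℕ) (t : ℝ), |t| ≤ n → X t = sol n t := by
    intro n t ht
    have hN : |t| ≤ (⌈|t|⌉₊ : ℝ) := Nat.le_ceil _
    show sol ⌈|t|⌉₊ t = sol n t
    rcases le_total (⌈|t|⌉₊) n with h | h
    · exact huniq _ n h (hmem t _ hN)
    · exact (huniq n _ h (hmem t n ht)).symm
  have hX0 : X 0 = (0, c) := by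
    have : X 0 = sol 0 0 := hXeq 0 0 (by simp)
    rw [this, h0 0]
  refine ⟨X, hX0, ?_⟩
  intro t
  set m : ℕ := ⌈|t|⌉₊ + 1 with hmd
  have htm : |t| ≤ (m:ℝ) := by
    have := Nat.le_ceil |t|
    have h2 : ((⌈|t|⌉₊ : ℕ) : ℝ) ≤ (m:ℝ) := by
      simp only [hmd]; push_cast; linarith
    linarith
  have htlt : |t| < (m:ℝ) := by
    have := Nat.le_ceil |t|
    simp only [hmd]; push_cast
    linarith
  have hev : X =ᶠ[nhds t] sol m := by
    have hnb : Ioo (-(m:ℝ)) (m:ℝ) ∈ nhds t := by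
      apply Ioo_mem_nhds
      · have := abs_le.mp htm
        rcases abs_lt.mp htlt with ⟨h1, h2⟩
        linarith
      · rcases abs_lt.mp htlt with ⟨h1, h2⟩
        linarith
    filter_upwards [hnb] with s hs
    exact hXeq m s (by rw [abs_le]; exact ⟨hs.1.le, hs.2.le⟩)
  have hd := hder m t (hmem t m htm)
  have hXt : X t = sol m t := hXeq m t htm
  rw [← hXt] at hd
  exact hd.congr_of_eventuallyEq hev

/-- The key differential inequality for the Chetaev function. -/
lemma Udot_ge {ε x y ρ : ℝ} (hε : 0 < ε) (hx : x^2 ≤ ρ^2) (hy : y^2 ≤ ρ^2)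
    (hρh : ρ^2 ≤ 1/2) (hρ3 : ρ^2 * (ε + ε^3/8 + 1/6) ≤ ε/2) :
    ε/96*(y^4 + x^6) ≤ Udot ε x y := by
  have key : ε * (ε/96*(y^4 + x^6)) ≤ ε * Udot ε x y := by
    have hx2 : x^2 ≤ 1/2 := hx.trans hρh
    have hw0 : 0 ≤ 1 - x^2 := by linarith
    have hw1 : 1 - x^2 ≤ 1 := by nlinarith [sq_nonneg x]
    have hy6 : y^6 ≤ 1/2*y^4 := by
      have h1 : y^2 * y^4 ≤ ρ^2 * y^4 := mul_le_mul_of_nonneg_right hy (by positivity)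
      have h2 : ρ^2 * y^4 ≤ 1/2 * y^4 := mul_le_mul_of_nonneg_right hρh (by positivity)
      nlinarith
    have hx4y2 : x^4*y^2 ≤ ρ^2*(x^2*y^2) := by
      have h1 : x^2 * (x^2*y^2) ≤ ρ^2 * (x^2*y^2) :=
        mul_le_mul_of_nonneg_right hx (by positivity)
      nlinarith
    -- T3 : ε²/8 x³y³(1-x²) ≥ -(ε²/16)(x⁶+y⁶)
    have hT3 : -(ε^2/16*(x^6+y^6)) ≤ ε^2/8*(x^3*y^3*(1-x^2)) := by
      nlinarith [mul_nonneg (mul_nonneg (sq_nonneg ε) hw0) (sq_nonneg (x^3+y^3)),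
        mul_nonneg (mul_nonneg (sq_nonneg ε) (sq_nonneg x)) (add_nonneg (by positivity : (0:ℝ) ≤ x^6) (by positivity : (0:ℝ) ≤ y^6))]
    -- T4 : (ε/6) x⁵y(1-x²) ≤ ε²/24 x⁶ + 1/6 x⁴y²
    have hT4 : ε/6*(x^5*y*(1-x^2)) ≤ ε^2/24*x^6 + 1/6*(x^4*y^2) := by
      nlinarith [mul_nonneg hw0 (sq_nonneg (ε*x^3 - 2*x^2*y)),
        mul_nonneg (sq_nonneg x) (add_nonneg
          (by positivity : (0:ℝ) ≤ ε^2/4*x^6) (by positivity : (0:ℝ) ≤ x^4*y^2))]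
    -- T5 : the x⁴y² terms are absorbed by (ε/2) x²y²
    have hT5 : (ε + ε^3/8 + 1/6)*(x^4*y^2) ≤ ε/2*(x^2*y^2) := by
      have h1 : (ε + ε^3/8 + 1/6)*(x^4*y^2) ≤ (ε + ε^3/8 + 1/6)*(ρ^2*(x^2*y^2)) :=
        mul_le_mul_of_nonneg_left hx4y2 (by positivity)
      have h2 : (ε + ε^3/8 + 1/6)*(ρ^2*(x^2*y^2)) = (ρ^2*(ε + ε^3/8 + 1/6))*(x^2*y^2) := by ring
      have h3 : (ρ^2*(ε + ε^3/8 + 1/6))*(x^2*y^2) ≤ (ε/2)*(x^2*y^2) :=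
        mul_le_mul_of_nonneg_right hρ3 (by positivity)
      linarith
    -- expansion of ε * Udot
    have expand : ε * Udot ε x y
        = ε^2/24*y^4 + ε/2*(x^2*y^2) - (ε + ε^3/8)*(x^4*y^2)
          + ε^2/8*(x^3*y^3*(1-x^2)) - ε/6*(x^5*y*(1-x^2)) + ε^2/6*x^6 := by
      simp only [Udot]; ring
    rw [expand]
    have hy4 : ε^2/16*y^6 ≤ ε^2/32*y^4 := by nlinarith [sq_nonneg ε]
    nlinarith [hT3, hT4, hT5, sq_nonneg (x^3), sq_nonneg (y^2)]
  exact (mul_le_mul_iff_right₀ hε).mp key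

/-- Bound `|U| ≤ (1+ε)(x⁴+y²)` in the unit square. -/
lemma Ufun_abs_le {ε x y : ℝ} (hε : 0 < ε) (hx : x^2 ≤ 1) (hy : y^2 ≤ 1) :
    |Ufun ε (x, y)| ≤ (1+ε)*(x^4+y^2) := by
  have h1 := sq_nonneg (x^3 - y)
  have h2 := sq_nonneg (x^3 + y)
  have h3 := sq_nonneg (x*y^2 - y)
  have h4 := sq_nonneg (x*y^2 + y)
  have h5 : (0:ℝ) ≤ y^4*(1 - x^2) := mul_nonneg (by positivity) (by linarith)
  have h6 : (0:ℝ) ≤ y^2*(1 - y^2) := mul_nonneg (sq_nonneg _) (by linarith)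
  have h7 : (0:ℝ) ≤ x^4*(1 - x^2) := mul_nonneg (by positivity) (by linarith)
  have h8 : (0:ℝ) ≤ x^6 := by positivity
  have h9 : (0:ℝ) ≤ y^4 := by positivity
  have hU : Ufun ε (x, y) = ε/4 * x^4 + 1/2 * y^2 + ε/24 * x * y^3 - 1/6 * x^3 * y := rfl
  rw [hU, abs_le]
  constructor
  · nlinarith [mul_nonneg hε.le h3, mul_nonneg hε.le h5, mul_nonneg hε.le h6,
      mul_nonneg hε.le h9, mul_nonneg hε.le (sq_nonneg x), h2, h7, h8]
  · nlinarith [mul_nonneg hε.le h4, mul_nonneg hε.le h5, mul_nonneg hε.le h6,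
      mul_nonneg hε.le h9, mul_nonneg hε.le (sq_nonneg x), h1, h7, h8]

/-- Bound `U² ≤ 2(1+ε)²(x⁶+y⁴)` in the unit square. -/
lemma Usq_le {ε x y : ℝ} (hε : 0 < ε) (hx : x^2 ≤ 1) (hy : y^2 ≤ 1) :
    (Ufun ε (x, y))^2 ≤ 2*(1+ε)^2*(x^6 + y^4) := by
  have habs := Ufun_abs_le hε hx hy
  have h0 : (0:ℝ) ≤ (1+ε)*(x^4+y^2) := by positivity
  have hsq : (Ufun ε (x, y))^2 ≤ ((1+ε)*(x^4+y^2))^2 := by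
    have := abs_le.mp habs
    nlinarith [this.1, this.2, sq_nonneg (Ufun ε (x,y) + (1+ε)*(x^4+y^2))]
  refine hsq.trans ?_
  have k1 : (0:ℝ) ≤ (1+ε)^2 := sq_nonneg _
  have k2 := mul_nonneg k1 (sq_nonneg (x^4 - y^2))
  have k3 := mul_nonneg k1 (mul_nonneg (by positivity : (0:ℝ) ≤ x^6) (by linarith : (0:ℝ) ≤ 1 - x^2))
  nlinarith [k2, k3]

/-- The escape argument: no solution starting at `(0,c)`, `c > 0`, can remain
in the ball of radius ρ for all positive times. -/
lemma escape (ε c ρ : ℝ) (hε : 0 < ε) (hc : 0 < c) (hρ0 : 0 < ρ) (hρh : ρ^2 ≤ 1/2)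
    (hρ3 : ρ^2 * (ε + ε^3/8 + 1/6) ≤ ε/2)
    {g : ℝ → ℝ × ℝ} (hg : ∀ t, HasDerivAt g (Fv ε (g t)) t) (hg0 : g 0 = (0, c))
    (hin : ∀ t, 0 ≤ t → ‖g t‖ ≤ ρ) : False := by
  have hρ1 : ρ ≤ 1 := by nlinarith
  have hx2 : ∀ t, 0 ≤ t → ((g t).1)^2 ≤ ρ^2 := by
    intro t ht
    have h1 : |(g t).1| ≤ ρ := (norm_fst_le (g t)).trans (hin t ht)
    calc ((g t).1)^2 = |(g t).1|^2 := (sq_abs _).symm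
      _ ≤ ρ^2 := pow_le_pow_left₀ (abs_nonneg _) h1 2
  have hy2 : ∀ t, 0 ≤ t → ((g t).2)^2 ≤ ρ^2 := by
    intro t ht
    have h1 : |(g t).2| ≤ ρ := (norm_snd_le (g t)).trans (hin t ht)
    calc ((g t).2)^2 = |(g t).2|^2 := (sq_abs _).symm
      _ ≤ ρ^2 := pow_le_pow_left₀ (abs_nonneg _) h1 2
  have hx1 : ∀ t, 0 ≤ t → ((g t).1)^2 ≤ 1 := fun t ht => (hx2 t ht).trans (by linarith)
  have hy1 : ∀ t, 0 ≤ t → ((g t).2)^2 ≤ 1 := fun t ht => (hy2 t ht).trans (by linarith)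
  have hUder : ∀ t, HasDerivAt (fun s => Ufun ε (g s)) (Udot ε ((g t).1) ((g t).2)) t :=
    fun t => hasDerivAt_U_comp (hg t)
  have hUdotge : ∀ t, 0 ≤ t →
      ε/96*(((g t).2)^4 + ((g t).1)^6) ≤ Udot ε ((g t).1) ((g t).2) :=
    fun t ht => Udot_ge hε (hx2 t ht) (hy2 t ht) hρh hρ3
  have hU00 : Ufun ε (g 0) = c^2/2 := by
    rw [hg0]; show ε/4 * 0^4 + 1/2 * c^2 + ε/24 * 0 * c^3 - 1/6 * 0^3 * c = c^2/2; ring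
  have hUeq : ∀ t, Ufun ε (g t) = Ufun ε ((g t).1, (g t).2) := by intro t; rfl
  -- upper bound for U along the orbit
  have hUub : ∀ t, 0 ≤ t → Ufun ε (g t) ≤ 2*(1+ε) := by
    intro t ht
    have habs := Ufun_abs_le hε (hx1 t ht) (hy1 t ht)
    have h2 := (abs_le.mp habs).2
    rw [← hUeq t] at h2
    have hx4 : ((g t).1)^4 ≤ 1 := by nlinarith [hx1 t ht, sq_nonneg ((g t).1)]
    nlinarith [hy1 t ht, hε.le]
  -- U is monotone on [0, ∞)
  have hUmono : MonotoneOn (fun s => Ufun ε (g s)) (Ici 0) := by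
    apply monotoneOn_of_deriv_nonneg (convex_Ici _)
    · exact fun s _ => (hUder s).continuousAt.continuousWithinAt
    · exact fun s _ => (hUder s).differentiableAt.differentiableWithinAt
    · intro s hs
      rw [interior_Ici] at hs
      rw [(hUder s).deriv]
      refine le_trans ?_ (hUdotge s (le_of_lt hs))
      positivity
  have hUge : ∀ t, 0 ≤ t → c^2/2 ≤ Ufun ε (g t) := by
    intro t ht
    have h' : Ufun ε (g 0) ≤ Ufun ε (g t) := hUmono self_mem_Ici ht ht
    rwa [hU00] at h'
  -- the quadratic differential inequality
  set D : ℝ := 2*(1+ε)^2 with hDd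
  set c₂ : ℝ := ε/(96*D) with hc₂d
  have hD0 : 0 < D := by positivity
  have hc₂0 : 0 < c₂ := by positivity
  have hc₂D : c₂ * D = ε/96 := by rw [hc₂d]; field_simp
  have hquad : ∀ t, 0 ≤ t → c₂ * (Ufun ε (g t))^2 ≤ Udot ε ((g t).1) ((g t).2) := by
    intro t ht
    have h1 : (Ufun ε (g t))^2 ≤ D*(((g t).1)^6 + ((g t).2)^4) := by
      rw [hUeq t]
      exact Usq_le hε (hx1 t ht) (hy1 t ht)
    have h2 : c₂ * (Ufun ε (g t))^2 ≤ c₂ * (D*(((g t).1)^6 + ((g t).2)^4)) :=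
      mul_le_mul_of_nonneg_left h1 hc₂0.le
    have h3 : c₂ * (D*(((g t).1)^6 + ((g t).2)^4))
        = ε/96*(((g t).2)^4 + ((g t).1)^6) := by
      rw [← mul_assoc, hc₂D]; ring
    rw [h3] at h2
    exact h2.trans (hUdotge t ht)
  -- exponential growth
  set lam : ℝ := c₂ * (c^2/2) with hlamd
  have hlam0 : 0 < lam := by positivity
  set M : ℝ := 2*(1+ε) with hMd
  have hM0 : 0 < M := by positivity
  set T : ℝ := M/(lam*(c^2/2)) with hTd
  have hT0 : 0 < T := by positivity
  set ψ : ℝ → ℝ := fun u => Ufun ε (g u) * Real.exp (-(lam*u)) with hψd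
  have hψder : ∀ s, HasDerivAt ψ
      (Udot ε ((g s).1) ((g s).2) * Real.exp (-(lam*s))
        + Ufun ε (g s) * (Real.exp (-(lam*s)) * (-lam))) s := by
    intro s
    have hlin : HasDerivAt (fun u : ℝ => -(lam*u)) (-(lam*1)) s :=
      ((hasDerivAt_id s).const_mul lam).neg
    rw [mul_one] at hlin
    have hexp : HasDerivAt (fun u : ℝ => Real.exp (-(lam*u)))
        (Real.exp (-(lam*s)) * (-lam)) s := (Real.hasDerivAt_exp _).comp s hlin
    exact (hUder s).mul hexp
  have hψmono : MonotoneOn ψ (Icc 0 T) := by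
    apply monotoneOn_of_deriv_nonneg (convex_Icc _ _)
    · exact fun s _ => (hψder s).continuousAt.continuousWithinAt
    · exact fun s hs => (hψder s).differentiableAt.differentiableWithinAt
    · intro s hs
      rw [interior_Icc] at hs
      rw [(hψder s).deriv]
      have hs0 : (0:ℝ) ≤ s := hs.1.le
      have h1 : lam * Ufun ε (g s) ≤ Udot ε ((g s).1) ((g s).2) := by
        have hU0' : 0 ≤ Ufun ε (g s) := le_trans (by positivity) (hUge s hs0)
        have h2 : (c^2/2) * Ufun ε (g s) ≤ (Ufun ε (g s)) * Ufun ε (g s) :=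
          mul_le_mul_of_nonneg_right (hUge s hs0) hU0'
        have h3 : c₂ * ((c^2/2) * Ufun ε (g s)) ≤ c₂ * ((Ufun ε (g s)) * Ufun ε (g s)) :=
          mul_le_mul_of_nonneg_left h2 hc₂0.le
        have h4 := hquad s hs0
        have h5 : c₂ * ((Ufun ε (g s)) * Ufun ε (g s)) = c₂ * (Ufun ε (g s))^2 := by ring
        rw [h5] at h3
        calc lam * Ufun ε (g s) = c₂ * ((c^2/2) * Ufun ε (g s)) := by rw [hlamd]; ring
          _ ≤ c₂ * (Ufun ε (g s))^2 := h3
          _ ≤ _ := h4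
      have hexppos : 0 < Real.exp (-(lam*s)) := Real.exp_pos _
      have hkey : 0 ≤ (Udot ε ((g s).1) ((g s).2) - lam * Ufun ε (g s)) * Real.exp (-(lam*s)) :=
        mul_nonneg (by linarith) hexppos.le
      nlinarith [hkey]
  -- conclusion
  have hψT : ψ 0 ≤ ψ T := hψmono (left_mem_Icc.mpr hT0.le) (right_mem_Icc.mpr hT0.le) hT0.le
  have hψ0 : ψ 0 = c^2/2 := by
    show Ufun ε (g 0) * Real.exp (-(lam*0)) = c^2/2
    rw [hU00]; simp
  have hUT : (c^2/2) * Real.exp (lam*T) ≤ Ufun ε (g T) := by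
    have h1 : Ufun ε (g T) = ψ T * Real.exp (lam*T) := by
      show Ufun ε (g T) = Ufun ε (g T) * Real.exp (-(lam*T)) * Real.exp (lam*T)
      rw [mul_assoc, ← Real.exp_add]; simp
    rw [h1]
    apply mul_le_mul_of_nonneg_right _ (Real.exp_pos _).le
    rw [← hψ0]; exact hψT
  have hexpT : lam*T + 1 ≤ Real.exp (lam*T) := Real.add_one_le_exp _
  have hMT : lam * T * (c^2/2) = M := by
    rw [hTd]; field_simp
  have hfin : (c^2/2) * Real.exp (lam*T) ≥ c^2/2 + M := by
    have h1 : (c^2/2) * (lam*T + 1) ≤ (c^2/2) * Real.exp (lam*T) :=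
      mul_le_mul_of_nonneg_left hexpT (by positivity)
    have h2 : (c^2/2) * (lam*T + 1) = c^2/2 + M := by
      rw [← hMT]; ring
    linarith
  have hub := hUub T hT0.le
  have hub' : Ufun ε (g T) ≤ M := by rw [hMd]; exact hub
  have hcsq : 0 < c^2/2 := by positivity
  linarith [hUT, hfin, hub']


end UnstableAux


/-- `IsSolS μ β ε x y` says that t ↦ (x t, y t) is a solution of the system (S):
    x' = y, y' = (μ + x² − x⁴)y + βx − εx³. -/
def IsSolS (μ β ε : ℝ) (x y : ℝ → ℝ) : Prop :=
  (∀ t : ℝ, HasDerivAt x (y t) t) ∧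
  (∀ t : ℝ, HasDerivAt y ((μ + x t ^ 2 - x t ^ 4) * y t + β * x t - ε * x t ^ 3) t)

/-- For ε > 0, β = 0, μ = 0, with V(x,y) = (ε/4)x⁴ + (1/2)y²: along every solution
    of (S) one has (d/dt)V(x(t),y(t)) = x(t)²y(t)²(1 − x(t)²), and the equilibrium
    (0,0) is Lyapunov unstable: there is r > 0 such that for each δ > 0 some
    solution starts within δ of the origin but leaves the ball of radius r at a
    positive time. -/
theorem V_deriv_and_origin_unstable (ε : ℝ) (hε : 0 < ε) :
    (∀ x y : ℝ → ℝ, IsSolS 0 0 ε x y → ∀ t : ℝ,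
      HasDerivAt (fun s : ℝ => ε / 4 * x s ^ 4 + 1 / 2 * y s ^ 2)
        (x t ^ 2 * y t ^ 2 * (1 - x t ^ 2)) t) ∧
    (∃ r > (0 : ℝ), ∀ δ > (0 : ℝ), ∃ x y : ℝ → ℝ, IsSolS 0 0 ε x y ∧
      dist ((x 0, y 0) : ℝ × ℝ) ((0, 0) : ℝ × ℝ) < δ ∧
      ∃ t > (0 : ℝ), r ≤ dist ((x t, y t) : ℝ × ℝ) ((0, 0) : ℝ × ℝ)) := by
  constructor
  · -- Part 1 : derivative of V along solutions
    intro x y hsol t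
    obtain ⟨hx, hy⟩ := hsol
    have h1 := (((hx t).pow 4).const_mul (ε/4)).add (((hy t).pow 2).const_mul (1/2 : ℝ))
    refine h1.congr_deriv ?_
    push_cast
    ring
  · -- Part 2 : instability
    set ρ : ℝ := Real.sqrt (min (1/2) (ε/(2*(ε + ε^3/8 + 1/6)))) with hρd
    have hD' : (0:ℝ) < ε + ε^3/8 + 1/6 := by positivity
    have hmin0 : (0:ℝ) < min (1/2) (ε/(2*(ε + ε^3/8 + 1/6))) :=
      lt_min (by norm_num) (by positivity)
    have hρ0 : 0 < ρ := Real.sqrt_pos.mpr hmin0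
    have hρsq : ρ^2 = min (1/2) (ε/(2*(ε + ε^3/8 + 1/6))) := Real.sq_sqrt hmin0.le
    have hρh : ρ^2 ≤ 1/2 := by rw [hρsq]; exact min_le_left _ _
    have hρ3 : ρ^2 * (ε + ε^3/8 + 1/6) ≤ ε/2 := by
      rw [hρsq]
      have h1 : min (1/2) (ε/(2*(ε + ε^3/8 + 1/6))) ≤ ε/(2*(ε + ε^3/8 + 1/6)) :=
        min_le_right _ _
      have h2 := mul_le_mul_of_nonneg_right h1 hD'.le
      have h3 : ε/(2*(ε + ε^3/8 + 1/6)) * (ε + ε^3/8 + 1/6) = ε/2 := by field_simp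
      linarith
    have hρ1 : ρ ≤ 1 := by nlinarith
    refine ⟨ρ, hρ0, ?_⟩
    intro δ hδ
    set c : ℝ := min (min (δ/2) (ρ/2)) (Real.sqrt (ε/32)) with hcd
    have hc0 : 0 < c :=
      lt_min (lt_min (by linarith) (by linarith)) (Real.sqrt_pos.mpr (by positivity))
    have hcδ2 : c ≤ δ/2 := le_trans (min_le_left _ _) (min_le_left _ _)
    have hcρ2 : c ≤ ρ/2 := le_trans (min_le_left _ _) (min_le_right _ _)
    have hc1 : c ≤ 1/2 := by linarith
    have hc2 : c^2 ≤ ε/32 := by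
      have h1 : c ≤ Real.sqrt (ε/32) := min_le_right _ _
      have h2 : c^2 ≤ (Real.sqrt (ε/32))^2 := pow_le_pow_left₀ hc0.le h1 2
      rwa [Real.sq_sqrt (by positivity : (0:ℝ) ≤ ε/32)] at h2
    obtain ⟨X, hX0, hX'⟩ := exists_global_sol ε c hε hc0 hc1 hc2
    refine ⟨fun t => (X t).1, fun t => (X t).2, ⟨?_, ?_⟩, ?_, ?_⟩
    · intro t
      exact comp_fst (hX' t)
    · intro t
      have h := comp_snd (hX' t)
      convert h using 1
      show (0 + ((X t).1)^2 - ((X t).1)^4) * (X t).2 + 0 * (X t).1 - ε * ((X t).1)^3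
          = (Fv ε (X t)).2
      simp only [Fv]
      ring
    · have h00 : (((X 0).1, (X 0).2) : ℝ × ℝ) = ((0:ℝ), c) := by rw [Prod.mk.eta, hX0]
      rw [h00, Prod.dist_eq]
      have : dist (0:ℝ) (0:ℝ) = 0 := by simp
      rw [this, Real.dist_eq]
      rw [max_eq_right (by simp [abs_of_pos hc0]; linarith [hc0.le] : (0:ℝ) ≤ |c - 0|)]
      simp only [sub_zero]
      rw [abs_of_pos hc0]
      linarith
    · by_contra hcon
      push_neg at hcon
      have hin : ∀ t, 0 ≤ t → ‖X t‖ ≤ ρ := by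
        intro t ht
        rcases eq_or_lt_of_le ht with h | h
        · rw [← h, hX0]
          apply norm_le_of_abs
          · show |(0:ℝ)| ≤ ρ
            simp
            linarith
          · show |c| ≤ ρ
            rw [abs_of_pos hc0]
            linarith
        · have h2 := hcon t h
          have h3 : dist ((((X t).1, (X t).2)) : ℝ × ℝ) ((0, 0) : ℝ × ℝ) = ‖X t‖ := by
            rw [Prod.mk.eta]
            show dist (X t) ((0,0) : ℝ × ℝ) = ‖X t‖
            have hz : ((0,0) : ℝ × ℝ) = (0 : ℝ × ℝ) := rfl
            rw [hz, dist_zero_right]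
          rw [h3] at h2
          exact h2.le
      exact escape ε c ρ hε hc0 hρ0 hρh hρ3 hX' hX0 hin
end

section
/- Let β > 0, ε > 0, and let μ, ε₁ be real numbers. Then the improper integral ∫_{−∞}^{∞} (2β²/ε) sech²(t) tanh²(t) (μ + (2β/ε) sech²(t) − (4β²ε₁²/ε²) sech⁴(t)) dt converges and equals 4β²μ/(3ε) + 16β³/(15ε²) − 128β⁴ε₁²/(105ε³). In particular this Melnikov integral vanishes if and only if μ = 32β²ε₁²/(35ε²) − 4β/(5ε). -/
set_option linter.unusedVariables false

open MeasureTheory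

section MelnikovAux
open Filter Topology Set

private lemma my_hasDerivAt_tanh (x : ℝ) :
    HasDerivAt Real.tanh ((1 / Real.cosh x) ^ 2) x := by
  have h := (Real.hasDerivAt_sinh x).div (Real.hasDerivAt_cosh x) (Real.cosh_pos x).ne'
  have hfun : Real.tanh = fun y => Real.sinh y / Real.cosh y := by
    funext y; exact Real.tanh_eq_sinh_div_cosh y
  rw [hfun]
  refine h.congr_deriv ?_
  rw [show Real.cosh x * Real.cosh x - Real.sinh x * Real.sinh x = 1 from by
    rw [← sq, ← sq]; exact Real.cosh_sq_sub_sinh_sq x]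
  rw [div_pow, one_pow]

private lemma my_sech_sq (x : ℝ) : (1 / Real.cosh x) ^ 2 = 1 - Real.tanh x ^ 2 := by
  have h1 : Real.cosh x ^ 2 - Real.sinh x ^ 2 = 1 := Real.cosh_sq_sub_sinh_sq x
  have hc := (Real.cosh_pos x).ne'
  rw [Real.tanh_eq_sinh_div_cosh]
  field_simp
  exact h1.symm

private lemma my_tanh_tendsto : Tendsto Real.tanh atTop (𝓝 1) := by
  have hrepr : ∀ x : ℝ, Real.tanh x = (1 - Real.exp (-(2 * x))) / (1 + Real.exp (-(2 * x))) := by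
    intro x
    rw [Real.tanh_eq_sinh_div_cosh, Real.sinh_eq, Real.cosh_eq]
    have hab : Real.exp x * Real.exp (-x) = 1 := by rw [← Real.exp_add]; simp
    have h2 : Real.exp (-(2 * x)) = Real.exp (-x) ^ 2 := by
      rw [sq, ← Real.exp_add]; ring_nf
    rw [h2, div_eq_div_iff (by positivity) (by positivity)]
    linear_combination Real.exp (-x) * hab
  have h2x : Tendsto (fun x : ℝ => (2 : ℝ) * x) atTop atTop :=
    tendsto_id.const_mul_atTop two_pos
  have hneg : Tendsto (fun x : ℝ => -(2 * x)) atTop atBot :=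
    tendsto_neg_atTop_atBot.comp h2x
  have hexp : Tendsto (fun x : ℝ => Real.exp (-(2 * x))) atTop (𝓝 0) :=
    Real.tendsto_exp_atBot.comp hneg
  have h : Tendsto (fun x : ℝ => (1 - Real.exp (-(2 * x))) / (1 + Real.exp (-(2 * x))))
      atTop (𝓝 ((1 - 0) / (1 + 0))) :=
    Tendsto.div (tendsto_const_nhds.sub hexp) (tendsto_const_nhds.add hexp) (by norm_num)
  norm_num at h
  exact h.congr fun x => (hrepr x).symm

private lemma melnikov_piece {F g : ℝ → ℝ} (l : ℝ)
    (hd : ∀ x, HasDerivAt F (g x) x) (hpos : ∀ x, 0 ≤ g x)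
    (heven : ∀ x, g (-x) = g x) (hlim : Tendsto F atTop (𝓝 l)) :
    Integrable g ∧ ∫ x, g x = 2 * (l - F 0) := by
  have int_Ioi : IntegrableOn g (Ioi 0) :=
    integrableOn_Ioi_deriv_of_nonneg' (fun x _ => hd x) (fun x _ => hpos x) hlim
  have val_Ioi : ∫ x in Ioi (0 : ℝ), g x = l - F 0 :=
    integral_Ioi_of_hasDerivAt_of_nonneg' (fun x _ => hd x) (fun x _ => hpos x) hlim
  have int_Iic : IntegrableOn g (Iic 0) := by
    rw [← Measure.map_neg_eq_self (volume : Measure ℝ)]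
    have m : MeasurableEmbedding fun x : ℝ => -x :=
      (Homeomorph.neg ℝ).measurableEmbedding
    rw [m.integrableOn_map_iff]
    simp_rw [Function.comp_def, heven, neg_preimage, neg_Iic, neg_zero]
    exact (integrableOn_Ici_iff_integrableOn_Ioi).mpr int_Ioi
  have hint : Integrable g := by
    have := int_Iic.union int_Ioi
    rwa [Iic_union_Ioi, integrableOn_univ] at this
  refine ⟨hint, ?_⟩
  have hIic : ∫ x in Iic (0 : ℝ), g x = l - F 0 := by
    have h0 : ∫ x in Iic (0 : ℝ), g (-x) = ∫ x in Ioi (-(0 : ℝ)), g x :=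
      integral_comp_neg_Iic 0 g
    simp_rw [heven, neg_zero] at h0
    rw [h0, val_Ioi]
  rw [← intervalIntegral.integral_Iic_add_Ioi int_Iic int_Ioi, hIic, val_Ioi]
  ring

private lemma piece1 : Integrable (fun t => Real.tanh t ^ 2 * (1 / Real.cosh t) ^ 2) ∧
    ∫ t, Real.tanh t ^ 2 * (1 / Real.cosh t) ^ 2 = 2 / 3 := by
  have h := melnikov_piece (F := fun t => Real.tanh t ^ 3 / 3)
    (g := fun t => Real.tanh t ^ 2 * (1 / Real.cosh t) ^ 2) (1 / 3)
    (fun x => by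
      have := ((my_hasDerivAt_tanh x).pow 3).div_const 3
      refine this.congr_deriv ?_; ring)
    (fun x => by positivity)
    (fun x => by simp only [Real.tanh_neg, Real.cosh_neg, neg_sq])
    (by
      have hc : Continuous (fun u : ℝ => u ^ 3 / 3) := by continuity
      have h := (hc.tendsto 1).comp my_tanh_tendsto
      norm_num at h
      exact h)
  exact ⟨h.1, by rw [h.2]; norm_num⟩

private lemma piece2 : Integrable (fun t => Real.tanh t ^ 2 * (1 / Real.cosh t) ^ 4) ∧
    ∫ t, Real.tanh t ^ 2 * (1 / Real.cosh t) ^ 4 = 4 / 15 := by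
  have h := melnikov_piece (F := fun t => Real.tanh t ^ 3 / 3 - Real.tanh t ^ 5 / 5)
    (g := fun t => Real.tanh t ^ 2 * (1 / Real.cosh t) ^ 4) (2 / 15)
    (fun x => by
      have := (((my_hasDerivAt_tanh x).pow 3).div_const 3).sub
        (((my_hasDerivAt_tanh x).pow 5).div_const 5)
      refine this.congr_deriv (Eq.symm ?_)
      show Real.tanh x ^ 2 * (1 / Real.cosh x) ^ 4 = _
      have h4 : (1 / Real.cosh x) ^ 4 = (1 - Real.tanh x ^ 2) ^ 2 := by
        rw [show (4 : ℕ) = 2 * 2 from rfl, pow_mul, my_sech_sq]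
      rw [h4, my_sech_sq]; ring)
    (fun x => by positivity)
    (fun x => by simp only [Real.tanh_neg, Real.cosh_neg, neg_sq])
    (by
      have hc : Continuous (fun u : ℝ => u ^ 3 / 3 - u ^ 5 / 5) := by continuity
      have h := (hc.tendsto 1).comp my_tanh_tendsto
      norm_num at h
      exact h)
  exact ⟨h.1, by rw [h.2]; norm_num⟩

private lemma piece3 : Integrable (fun t => Real.tanh t ^ 2 * (1 / Real.cosh t) ^ 6) ∧
    ∫ t, Real.tanh t ^ 2 * (1 / Real.cosh t) ^ 6 = 16 / 105 := by
  have h := melnikov_piece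
    (F := fun t => Real.tanh t ^ 3 / 3 - 2 * Real.tanh t ^ 5 / 5 + Real.tanh t ^ 7 / 7)
    (g := fun t => Real.tanh t ^ 2 * (1 / Real.cosh t) ^ 6) (8 / 105)
    (fun x => by
      have := ((((my_hasDerivAt_tanh x).pow 3).div_const 3).sub
        ((((my_hasDerivAt_tanh x).pow 5).const_mul 2).div_const 5)).add
        (((my_hasDerivAt_tanh x).pow 7).div_const 7)
      refine this.congr_deriv (Eq.symm ?_)
      show Real.tanh x ^ 2 * (1 / Real.cosh x) ^ 6 = _
      have h6 : (1 / Real.cosh x) ^ 6 = (1 - Real.tanh x ^ 2) ^ 3 := by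
        rw [show (6 : ℕ) = 2 * 3 from rfl, pow_mul, my_sech_sq]
      rw [h6, my_sech_sq]; ring)
    (fun x => by positivity)
    (fun x => by simp only [Real.tanh_neg, Real.cosh_neg, neg_sq])
    (by
      have hc : Continuous (fun u : ℝ => u ^ 3 / 3 - 2 * u ^ 5 / 5 + u ^ 7 / 7) := by continuity
      have h := (hc.tendsto 1).comp my_tanh_tendsto
      norm_num at h
      exact h)
  exact ⟨h.1, by rw [h.2]; norm_num⟩

end MelnikovAux

/-- For β > 0, ε > 0 and real μ, ε₁, the Melnikov integral
    ∫ (2β²/ε) sech²t tanh²t (μ + (2β/ε) sech²t − (4β²ε₁²/ε²) sech⁴t) dt over ℝ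
    converges and equals 4β²μ/(3ε) + 16β³/(15ε²) − 128β⁴ε₁²/(105ε³); in
    particular it vanishes iff μ = 32β²ε₁²/(35ε²) − 4β/(5ε). -/
theorem melnikov_integral (β ε μ ε₁ : ℝ) (hβ : 0 < β) (hε : 0 < ε) :
    let f : ℝ → ℝ := fun t =>
      2 * β ^ 2 / ε * (1 / Real.cosh t) ^ 2 * Real.tanh t ^ 2 *
        (μ + 2 * β / ε * (1 / Real.cosh t) ^ 2 -
          4 * β ^ 2 * ε₁ ^ 2 / ε ^ 2 * (1 / Real.cosh t) ^ 4)
    Integrable f volume ∧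
    (∫ t : ℝ, f t) =
      4 * β ^ 2 * μ / (3 * ε) + 16 * β ^ 3 / (15 * ε ^ 2) -
        128 * β ^ 4 * ε₁ ^ 2 / (105 * ε ^ 3) ∧
    ((∫ t : ℝ, f t) = 0 ↔ μ = 32 * β ^ 2 * ε₁ ^ 2 / (35 * ε ^ 2) - 4 * β / (5 * ε)) := by
  obtain ⟨i1, v1⟩ := piece1
  obtain ⟨i2, v2⟩ := piece2
  obtain ⟨i3, v3⟩ := piece3
  intro f
  have hε' : ε ≠ 0 := hε.ne'
  have hf : f = fun t =>
      2 * β ^ 2 * μ / ε * (Real.tanh t ^ 2 * (1 / Real.cosh t) ^ 2) +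
        4 * β ^ 3 / ε ^ 2 * (Real.tanh t ^ 2 * (1 / Real.cosh t) ^ 4) +
        -(8 * β ^ 4 * ε₁ ^ 2 / ε ^ 3) * (Real.tanh t ^ 2 * (1 / Real.cosh t) ^ 6) := by
    funext t
    show 2 * β ^ 2 / ε * (1 / Real.cosh t) ^ 2 * Real.tanh t ^ 2 *
        (μ + 2 * β / ε * (1 / Real.cosh t) ^ 2 -
          4 * β ^ 2 * ε₁ ^ 2 / ε ^ 2 * (1 / Real.cosh t) ^ 4) = _
    ring
  have hint : Integrable (fun t =>
      2 * β ^ 2 * μ / ε * (Real.tanh t ^ 2 * (1 / Real.cosh t) ^ 2) +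
        4 * β ^ 3 / ε ^ 2 * (Real.tanh t ^ 2 * (1 / Real.cosh t) ^ 4) +
        -(8 * β ^ 4 * ε₁ ^ 2 / ε ^ 3) * (Real.tanh t ^ 2 * (1 / Real.cosh t) ^ 6)) :=
    ((i1.const_mul _).add (i2.const_mul _)).add (i3.const_mul _)
  have e1 : Integrable (fun t =>
      2 * β ^ 2 * μ / ε * (Real.tanh t ^ 2 * (1 / Real.cosh t) ^ 2)) volume :=
    i1.const_mul _
  have e2 : Integrable (fun t =>
      4 * β ^ 3 / ε ^ 2 * (Real.tanh t ^ 2 * (1 / Real.cosh t) ^ 4)) volume :=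
    i2.const_mul _
  have e3 : Integrable (fun t =>
      -(8 * β ^ 4 * ε₁ ^ 2 / ε ^ 3) * (Real.tanh t ^ 2 * (1 / Real.cosh t) ^ 6)) volume :=
    i3.const_mul _
  have e12 : Integrable (fun t =>
      2 * β ^ 2 * μ / ε * (Real.tanh t ^ 2 * (1 / Real.cosh t) ^ 2) +
        4 * β ^ 3 / ε ^ 2 * (Real.tanh t ^ 2 * (1 / Real.cosh t) ^ 4)) volume := e1.add e2
  have hval : (∫ t : ℝ, f t) =
      4 * β ^ 2 * μ / (3 * ε) + 16 * β ^ 3 / (15 * ε ^ 2) -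
        128 * β ^ 4 * ε₁ ^ 2 / (105 * ε ^ 3) := by
    simp only [hf]
    rw [integral_add e12 e3, integral_add e1 e2,
      integral_const_mul _ _, integral_const_mul _ _, integral_const_mul _ _, v1, v2, v3]
    field_simp
    ring
  refine ⟨by rw [hf]; exact hint, hval, ?_⟩
  rw [hval, show 4 * β ^ 2 * μ / (3 * ε) + 16 * β ^ 3 / (15 * ε ^ 2) -
        128 * β ^ 4 * ε₁ ^ 2 / (105 * ε ^ 3) =
      4 * β ^ 2 / (3 * ε) *
        (μ - (32 * β ^ 2 * ε₁ ^ 2 / (35 * ε ^ 2) - 4 * β / (5 * ε))) from by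
    field_simp; ring]
  have hK : 4 * β ^ 2 / (3 * ε) ≠ 0 := by positivity
  rw [mul_eq_zero]
  constructor
  · rintro (h | h)
    · exact absurd h hK
    · exact sub_eq_zero.mp h
  · intro h
    right
    rw [h]
    ring
end

section
/- Let μ, β, ε be real parameters with μ ≤ −1/4. Then the system (S) has no nonconstant periodic solution: there is no T > 0 and no nonconstant solution (x, y) : ℝ → ℝ² of (S) with (x(t + T), y(t + T)) = (x(t), y(t)) for all t. -/
set_option linter.unusedVariables false

/-- For μ ≤ −1/4 the system (S) has no nonconstant periodic solution
    (Bendixson–Dulac). -/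
theorem no_periodic_orbit_of_mu_le (μ β ε : ℝ) (hμ : μ ≤ -(1 / 4 : ℝ)) :
    ¬ ∃ T > (0 : ℝ), ∃ x y : ℝ → ℝ,
        IsSolS μ β ε x y ∧
        (∀ t : ℝ, x (t + T) = x t ∧ y (t + T) = y t) ∧
        (∃ t s : ℝ, ((x t, y t) : ℝ × ℝ) ≠ (x s, y s)) := by
  rintro ⟨T, hT, x, y, ⟨hx, hy⟩, hper, t₀, s₀, hne⟩
  set V : ℝ → ℝ := fun t => y t ^ 2 / 2 - β * x t ^ 2 / 2 + ε * x t ^ 4 / 4 with hVdef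
  have hVd : ∀ t, HasDerivAt V ((μ + x t ^ 2 - x t ^ 4) * y t ^ 2) t := by
    intro t
    have h1 := ((hy t).pow 2).div_const 2
    have h2 := (((hx t).pow 2).const_mul β).div_const 2
    have h3 := (((hx t).pow 4).const_mul ε).div_const 4
    have h := (h1.sub h2).add h3
    refine h.congr_deriv ?_
    ring
  have hdle : ∀ t, (μ + x t ^ 2 - x t ^ 4) * y t ^ 2 ≤ 0 := by
    intro t
    have h : μ + x t ^ 2 - x t ^ 4 ≤ 0 := by nlinarith [sq_nonneg (x t ^ 2 - 1 / 2)]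
    exact mul_nonpos_of_nonpos_of_nonneg h (sq_nonneg _)
  have hanti : Antitone V := by
    apply antitone_of_deriv_nonpos
    · exact fun t => (hVd t).differentiableAt
    · intro t; rw [(hVd t).deriv]; exact hdle t
  have hVper : ∀ t, V (t + T) = V t := by
    intro t; simp only [hVdef]; rw [(hper t).1, (hper t).2]
  have hVnper : ∀ (n : ℕ) (t : ℝ), V (t + n * T) = V t := by
    intro n
    induction n with
    | zero => simp
    | succ n ih =>
      intro t
      have h : t + ((n : ℝ) + 1) * T = (t + n * T) + T := by ring
      push_cast
      rw [h, hVper, ih]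
  have hVconst : ∀ a b : ℝ, V a = V b := by
    have key : ∀ a b : ℝ, a ≤ b → V a = V b := by
      intro a b hab
      obtain ⟨n, hn⟩ := exists_nat_ge ((b - a) / T)
      have hbn : b ≤ a + n * T := by
        have := (div_le_iff₀ hT).mp hn
        linarith
      have h1 : V b ≤ V a := hanti hab
      have h2 : V (a + n * T) ≤ V b := hanti hbn
      have h3 : V (a + n * T) = V a := hVnper n a
      linarith
    intro a b
    rcases le_total a b with h | h
    · exact key a b h
    · exact (key b a h).symm
  have hzero : ∀ t, (μ + x t ^ 2 - x t ^ 4) * y t ^ 2 = 0 := by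
    intro t
    have hfun : V = fun _ => V 0 := funext fun s => hVconst s 0
    have h := hVd t
    rw [hfun] at h
    exact (h.unique (hasDerivAt_const t (V 0))).symm ▸ rfl
  have hy0 : ∀ t, y t = 0 := by
    by_contra hcon
    push_neg at hcon
    obtain ⟨t₁, ht₁⟩ := hcon
    have hx2 : ∀ s, y s ≠ 0 → x s ^ 2 = 1 / 2 := by
      intro s hs
      have h := hzero s
      have hy2 : y s ^ 2 ≠ 0 := pow_ne_zero 2 hs
      have h2 : μ + x s ^ 2 - x s ^ 4 = 0 := by
        rcases mul_eq_zero.1 h with h' | h'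
        · exact h'
        · exact absurd h' hy2
      nlinarith [sq_nonneg (x s ^ 2 - 1 / 2)]
    have hconty : Continuous y :=
      Differentiable.continuous (fun t => (hy t).differentiableAt)
    have hnbhd : ∀ᶠ s in nhds t₁, y s ≠ 0 :=
      hconty.continuousAt.eventually_ne ht₁
    have hxconst : (fun s => x s ^ 2) =ᶠ[nhds t₁] fun _ => (1 / 2 : ℝ) :=
      hnbhd.mono fun s hs => hx2 s hs
    have hd : HasDerivAt (fun s => x s ^ 2) (2 * x t₁ ^ 1 * y t₁) t₁ := (hx t₁).pow 2
    have hd0 : HasDerivAt (fun _ : ℝ => (1 / 2 : ℝ)) (2 * x t₁ ^ 1 * y t₁) t₁ :=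
      hd.congr_of_eventuallyEq hxconst.symm
    have h0 := (hasDerivAt_const t₁ ((1 : ℝ) / 2)).unique hd0
    have hx1 : x t₁ ^ 2 = 1 / 2 := hx2 t₁ ht₁
    have hxne : x t₁ ≠ 0 := by
      intro h; rw [h] at hx1; norm_num at hx1
    have : x t₁ * y t₁ = 0 := by nlinarith
    rcases mul_eq_zero.1 this with h | h
    · exact hxne h
    · exact ht₁ h
  have hxconst : ∀ a b : ℝ, x a = x b := by
    have hdx : ∀ t, HasDerivAt x 0 t := fun t => hy0 t ▸ hx t
    have hdiff : Differentiable ℝ x := fun t => (hdx t).differentiableAt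
    have hderiv : ∀ t, deriv x t = 0 := fun t => (hdx t).deriv
    exact fun a b => is_const_of_deriv_eq_zero hdiff hderiv a b
  exact hne (by rw [Prod.mk.injEq]; exact ⟨hxconst t₀ s₀, by rw [hy0, hy0]⟩)
end

section
/- Let μ, β, ε be real parameters such that either (β > 0 and ε ≤ 0) or (β = 0 and ε < 0). Then the system (S) has no nonconstant periodic solution, and it has no homoclinic orbit: there is no nonconstant solution γ : ℝ → ℝ² of (S) with γ(t) → (0,0) as t → +∞ and as t → −∞. -/
set_option linter.unusedVariables false

open Filter

lemma neg_sol (μ β ε : ℝ) (x y : ℝ → ℝ) (hsol : IsSolS μ β ε x y) :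
    IsSolS μ β ε (fun t => -x t) (fun t => -y t) := by
  refine ⟨fun t => (hsol.1 t).neg, fun t => ?_⟩
  have : HasDerivAt (fun t => -y t) (-((μ + x t ^ 2 - x t ^ 4) * y t + β * x t - ε * x t ^ 3)) t := (hsol.2 t).neg
  convert this using 1
  ring

lemma sol_continuous (μ β ε : ℝ) (x y : ℝ → ℝ) (hsol : IsSolS μ β ε x y) :
    Continuous x :=
  Differentiable.continuous (fun t => (hsol.1 t).differentiableAt)

lemma key_max (μ β ε : ℝ) (h : (0 < β ∧ ε ≤ 0) ∨ (β = 0 ∧ ε < 0))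
    (x y : ℝ → ℝ) (hsol : IsSolS μ β ε x y) (t₀ : ℝ)
    (hmax : IsLocalMax x t₀) (hpos : 0 < x t₀) : False := by
  have hy0 : y t₀ = 0 := by
    have h1 := hmax.deriv_eq_zero
    rwa [(hsol.1 t₀).deriv] at h1
  set d : ℝ := (μ + x t₀ ^ 2 - x t₀ ^ 4) * y t₀ + β * x t₀ - ε * x t₀ ^ 3 with hd_def
  have hd : 0 < d := by
    rw [hd_def, hy0, mul_zero, zero_add]
    rcases h with ⟨hβ, hε⟩ | ⟨hβ, hε⟩
    · nlinarith [mul_pos hβ hpos, mul_nonneg (neg_nonneg.mpr hε) (pow_pos hpos 3).le]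
    · rw [hβ, zero_mul, zero_sub]
      exact neg_pos.mpr (mul_neg_of_neg_of_pos hε (pow_pos hpos 3))
  have hslope : Tendsto (slope y t₀) (nhdsWithin t₀ {t₀}ᶜ) (nhds d) :=
    hasDerivAt_iff_tendsto_slope.mp (hsol.2 t₀)
  have h1 : ∀ᶠ t in nhdsWithin t₀ (Set.Ioi t₀), 0 < slope y t₀ t :=
    (hslope.eventually (eventually_gt_nhds hd)).filter_mono
      (nhdsWithin_mono t₀ (fun t ht => ne_of_gt ht))
  have h2 : ∀ᶠ t in nhdsWithin t₀ (Set.Ioi t₀), x t ≤ x t₀ :=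
    hmax.filter_mono nhdsWithin_le_nhds
  obtain ⟨u, hu, hsub⟩ := mem_nhdsGT_iff_exists_Ioc_subset.mp (h1.and h2)
  have hu' : t₀ < u := hu
  have hy_pos : ∀ t ∈ Set.Ioc t₀ u, 0 < y t := by
    intro t ht
    have hq := (hsub ht).1
    rw [slope_def_field, hy0, sub_zero] at hq
    have ht0 : 0 < t - t₀ := sub_pos.mpr ht.1
    have := mul_pos hq ht0
    rwa [div_mul_cancel₀ _ (ne_of_gt ht0)] at this
  have hmono : StrictMonoOn x (Set.Icc t₀ u) := by
    apply strictMonoOn_of_deriv_pos (convex_Icc t₀ u)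
      (fun t _ => ((hsol.1 t).continuousAt).continuousWithinAt)
    intro t ht
    rw [interior_Icc] at ht
    rw [(hsol.1 t).deriv]
    exact hy_pos t ⟨ht.1, ht.2.le⟩
  have hlt : x t₀ < x u :=
    hmono (Set.left_mem_Icc.mpr hu'.le) (Set.right_mem_Icc.mpr hu'.le) hu'
  have : x u ≤ x t₀ := (hsub ⟨hu', le_refl u⟩).2
  linarith

lemma global_max_nonpos (μ β ε : ℝ) (h : (0 < β ∧ ε ≤ 0) ∨ (β = 0 ∧ ε < 0))
    (x y : ℝ → ℝ) (hsol : IsSolS μ β ε x y) (t₀ : ℝ)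
    (hub : ∀ s, x s ≤ x t₀) : x t₀ ≤ 0 := by
  by_contra hpos
  push_neg at hpos
  exact key_max μ β ε h x y hsol t₀ (Filter.Eventually.of_forall (fun s => hub s)) hpos

lemma periodic_nonpos (μ β ε : ℝ) (h : (0 < β ∧ ε ≤ 0) ∨ (β = 0 ∧ ε < 0))
    (T : ℝ) (hT : 0 < T) (x y : ℝ → ℝ) (hsol : IsSolS μ β ε x y)
    (hper : ∀ t, x (t + T) = x t) : ∀ s, x s ≤ 0 := by
  have hperiodic : Function.Periodic x T := hper
  have hcont : Continuous x := sol_continuous μ β ε x y hsol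
  obtain ⟨t₀, ht₀, hmax⟩ := (isCompact_Icc (a := (0:ℝ)) (b := T)).exists_isMaxOn
    (Set.nonempty_Icc.mpr (le_of_lt hT)) (hcont.continuousOn)
  have hub : ∀ s, x s ≤ x t₀ := by
    intro s
    obtain ⟨v, hv, hvs⟩ := hperiodic.exists_mem_Ico₀ hT s
    rw [hvs]
    exact hmax (Set.Ico_subset_Icc_self hv)
  intro s
  exact le_trans (hub s) (global_max_nonpos μ β ε h x y hsol t₀ hub)

lemma homoclinic_nonpos (μ β ε : ℝ) (h : (0 < β ∧ ε ≤ 0) ∨ (β = 0 ∧ ε < 0))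
    (x y : ℝ → ℝ) (hsol : IsSolS μ β ε x y)
    (htop : Tendsto x atTop (nhds 0)) (hbot : Tendsto x atBot (nhds 0)) :
    ∀ s, x s ≤ 0 := by
  intro s
  by_contra hs
  push_neg at hs
  have hcont : Continuous x := sol_continuous μ β ε x y hsol
  obtain ⟨A, hA⟩ := eventually_atTop.mp (htop.eventually (eventually_lt_nhds hs))
  obtain ⟨B, hB⟩ := eventually_atBot.mp (hbot.eventually (eventually_lt_nhds hs))
  have hsA : s ≤ A := by
    by_contra hc; push_neg at hc; exact absurd (hA s hc.le) (lt_irrefl _)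
  have hBs : B ≤ s := by
    by_contra hc; push_neg at hc; exact absurd (hB s hc.le) (lt_irrefl _)
  obtain ⟨t₀, ht₀, hmax⟩ := (isCompact_Icc (a := B) (b := A)).exists_isMaxOn
    (Set.nonempty_Icc.mpr (le_trans hBs hsA)) (hcont.continuousOn)
  have hst₀ : x s ≤ x t₀ := hmax ⟨hBs, hsA⟩
  have hub : ∀ u, x u ≤ x t₀ := by
    intro u
    rcases le_or_gt u A with hu | hu
    · rcases le_or_gt B u with hu' | hu'
      · exact hmax ⟨hu', hu⟩
      · exact le_trans (hB u hu'.le).le hst₀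
    · exact le_trans (hA u hu.le).le hst₀
  have := global_max_nonpos μ β ε h x y hsol t₀ hub
  linarith

lemma sol_trivial (μ β ε : ℝ) (x y : ℝ → ℝ) (hsol : IsSolS μ β ε x y)
    (hx0 : ∀ s, x s = 0) : ∀ s, y s = 0 := by
  intro s
  have hconst : HasDerivAt x 0 s := by
    have h0 : x = fun _ => (0:ℝ) := funext hx0
    rw [h0]
    exact hasDerivAt_const s 0
  exact (hsol.1 s).unique hconst

/-- If (β > 0 and ε ≤ 0) or (β = 0 and ε < 0), the system (S) has no nonconstant
    periodic solution and no homoclinic orbit to (0,0). -/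
theorem no_periodic_no_homoclinic (μ β ε : ℝ)
    (h : (0 < β ∧ ε ≤ 0) ∨ (β = 0 ∧ ε < 0)) :
    (¬ ∃ T > (0 : ℝ), ∃ x y : ℝ → ℝ,
        IsSolS μ β ε x y ∧
        (∀ t : ℝ, x (t + T) = x t ∧ y (t + T) = y t) ∧
        (∃ t s : ℝ, ((x t, y t) : ℝ × ℝ) ≠ (x s, y s))) ∧
    (¬ ∃ x y : ℝ → ℝ,
        IsSolS μ β ε x y ∧
        (∃ t s : ℝ, ((x t, y t) : ℝ × ℝ) ≠ (x s, y s)) ∧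
        Tendsto (fun t => ((x t, y t) : ℝ × ℝ)) atTop (nhds (0, 0)) ∧
        Tendsto (fun t => ((x t, y t) : ℝ × ℝ)) atBot (nhds (0, 0))) := by
  constructor
  · rintro ⟨T, hT, x, y, hsol, hper, t, s, hne⟩
    have h1 : ∀ u, x u ≤ 0 := periodic_nonpos μ β ε h T hT x y hsol (fun t => (hper t).1)
    have h2 : ∀ u, -x u ≤ 0 := periodic_nonpos μ β ε h T hT _ _ (neg_sol μ β ε x y hsol)
      (fun t => by simp [(hper t).1])
    have hx0 : ∀ u, x u = 0 := fun u => le_antisymm (h1 u) (by linarith [h2 u])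
    have hy0 := sol_trivial μ β ε x y hsol hx0
    exact hne (by simp [hx0, hy0])
  · rintro ⟨x, y, hsol, ⟨t, s, hne⟩, htop, hbot⟩
    have hxtop : Tendsto x atTop (nhds 0) := (continuous_fst.tendsto ((0:ℝ), (0:ℝ))).comp htop
    have hxbot : Tendsto x atBot (nhds 0) := (continuous_fst.tendsto ((0:ℝ), (0:ℝ))).comp hbot
    have h1 : ∀ u, x u ≤ 0 := homoclinic_nonpos μ β ε h x y hsol hxtop hxbot
    have h2 : ∀ u, -x u ≤ 0 := homoclinic_nonpos μ β ε h _ _ (neg_sol μ β ε x y hsol)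
      (by simpa using hxtop.neg) (by simpa using hxbot.neg)
    have hx0 : ∀ u, x u = 0 := fun u => le_antisymm (h1 u) (by linarith [h2 u])
    have hy0 := sol_trivial μ β ε x y hsol hx0
    exact hne (by simp [hx0, hy0])
end

section
/- Let ε > 0, β = 0, and μ ≤ −5/36. Then the system (S) has no nonconstant periodic solution: there is no T > 0 and no nonconstant solution (x, y) : ℝ → ℝ² of (S) with (x(t + T), y(t + T)) = (x(t), y(t)) for all t. -/
set_option linter.unusedVariables false

/-- For ε > 0, β = 0 and μ ≤ −5/36, the system (S) has no nonconstant periodic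
    solution. -/
theorem no_periodic_orbit_beta_zero (μ ε : ℝ) (hε : 0 < ε)
    (hμ : μ ≤ -(5 / 36 : ℝ)) :
    ¬ ∃ T > (0 : ℝ), ∃ x y : ℝ → ℝ,
        IsSolS μ 0 ε x y ∧
        (∀ t : ℝ, x (t + T) = x t ∧ y (t + T) = y t) ∧
        (∃ t s : ℝ, ((x t, y t) : ℝ × ℝ) ≠ (x s, y s)) := by
  rintro ⟨T, hT, x, y, ⟨hx, hy⟩, hper, t₀, s₀, hne⟩
  -- Liénard energy
  set E : ℝ → ℝ := fun t =>
    ε * x t ^ 4 / 4 + (y t - (μ * x t + x t ^ 3 / 3 - x t ^ 5 / 5)) ^ 2 / 2 with hEdef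
  have hE : ∀ t, HasDerivAt E (ε * x t ^ 4 * (μ + x t ^ 2 / 3 - x t ^ 4 / 5)) t := by
    intro t
    have h1 : HasDerivAt (fun t => x t ^ 4) (4 * x t ^ 3 * y t) t := by
      simpa using (hx t).fun_pow 4
    have hΦ : HasDerivAt (fun t => μ * x t + x t ^ 3 / 3 - x t ^ 5 / 5)
        ((μ + x t ^ 2 - x t ^ 4) * y t) t := by
      have h := (((hx t).const_mul μ).add (((hx t).fun_pow 3).div_const 3)).sub
        (((hx t).fun_pow 5).div_const 5)
      refine h.congr_deriv ?_
      push_cast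
      ring
    have h2 : HasDerivAt (fun t => (y t - (μ * x t + x t ^ 3 / 3 - x t ^ 5 / 5)) ^ 2)
        (2 * (y t - (μ * x t + x t ^ 3 / 3 - x t ^ 5 / 5)) ^ 1 *
          (((μ + x t ^ 2 - x t ^ 4) * y t + 0 * x t - ε * x t ^ 3)
            - (μ + x t ^ 2 - x t ^ 4) * y t)) t := by
      simpa using ((hy t).sub hΦ).fun_pow 2
    have h3 := ((h1.const_mul ε).div_const 4).add (h2.div_const 2)
    refine h3.congr_deriv ?_
    ring
  have h4nn : ∀ t, (0 : ℝ) ≤ x t ^ 4 := fun t => by positivity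
  have hE_nonpos : ∀ t, ε * x t ^ 4 * (μ + x t ^ 2 / 3 - x t ^ 4 / 5) ≤ 0 := by
    intro t
    nlinarith [mul_nonneg (mul_nonneg hε.le (h4nn t)) (sq_nonneg (x t ^ 2 - 5 / 6)),
      mul_nonneg (mul_nonneg hε.le (h4nn t)) (show (0:ℝ) ≤ -(5/36) - μ by linarith)]
  have hAnti : Antitone E :=
    antitone_of_deriv_nonpos (fun t => (hE t).differentiableAt)
      (fun t => by rw [(hE t).deriv]; exact hE_nonpos t)
  have hEper : ∀ t, E (t + T) = E t := by
    intro t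
    simp only [hEdef, (hper t).1, (hper t).2]
  have hshift : ∀ (n : ℕ) (t : ℝ), E (t + n * T) = E t := by
    intro n
    induction n with
    | zero => simp
    | succ n ih =>
      intro t
      have h : t + (n + 1 : ℕ) * T = (t + T) + n * T := by push_cast; ring
      rw [h, ih, hEper]
  have hconst : ∀ s u : ℝ, E s = E u := by
    have key : ∀ s u : ℝ, s ≤ u → E s = E u := by
      intro s u hsu
      obtain ⟨n, hn⟩ := exists_nat_ge ((u - s) / T)
      have hun : u ≤ s + n * T := by
        have := (div_le_iff₀ hT).mp hn
        linarith
      have h1 := hAnti hsu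
      have h2 := hAnti hun
      rw [hshift n s] at h2
      linarith
    intro s u
    rcases le_total s u with h | h
    · exact key s u h
    · exact (key u s h).symm
  have hEfun : E = fun _ => E 0 := funext fun t => hconst t 0
  have hderiv0 : ∀ t, ε * x t ^ 4 * (μ + x t ^ 2 / 3 - x t ^ 4 / 5) = 0 := by
    intro t
    have h := hE t
    rw [hEfun] at h
    exact h.unique (hasDerivAt_const t (E 0))
  have hx2 : ∀ t, x t ^ 2 = 0 ∨ x t ^ 2 = 5 / 6 := by
    intro t
    have heq : x t ^ 4 * (μ + x t ^ 2 / 3 - x t ^ 4 / 5) = 0 := by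
      apply mul_left_cancel₀ hε.ne'
      rw [mul_zero, ← mul_assoc]
      exact hderiv0 t
    have hle : x t ^ 4 * (x t ^ 2 - 5 / 6) ^ 2 ≤ 0 := by
      nlinarith [heq, mul_nonneg (h4nn t) (show (0:ℝ) ≤ -(5/36) - μ by linarith)]
    have hzero : x t ^ 4 * (x t ^ 2 - 5 / 6) ^ 2 = 0 :=
      le_antisymm hle (by positivity)
    rcases mul_eq_zero.mp hzero with h | h
    · left
      have : x t = 0 := by
        exact pow_eq_zero_iff (by norm_num) |>.mp h
      simp [this]
    · right
      have : x t ^ 2 - 5 / 6 = 0 := pow_eq_zero_iff (by norm_num) |>.mp h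
      linarith
  have hxc : Continuous fun t => x t ^ 2 := by
    have : Continuous x := by
      rw [continuous_iff_continuousAt]
      exact fun t => (hx t).continuousAt
    fun_prop
  -- Either x² ≡ 0 or x² ≡ 5/6; in both cases y ≡ 0 and x is constant.
  have hy0 : (∀ t, y t = 0) ∧ ∀ s u, x s = x u := by
    by_cases h0 : ∀ t, x t ^ 2 = 0
    · have hx0 : ∀ t, x t = 0 := fun t => by
        have := h0 t; exact pow_eq_zero_iff (n := 2) (by norm_num) |>.mp this
      have hxfun : x = fun _ => (0 : ℝ) := funext hx0
      constructor
      · intro t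
        have h := hx t
        rw [hxfun] at h
        exact ((hasDerivAt_const t (0:ℝ)).unique h).symm
      · intro s u; rw [hx0 s, hx0 u]
    · push_neg at h0
      obtain ⟨t₁, ht₁⟩ := h0
      have ht₁' : x t₁ ^ 2 = 5 / 6 := (hx2 t₁).resolve_left ht₁
      have hall : ∀ t, x t ^ 2 = 5 / 6 := by
        intro t
        by_contra ht
        have ht' : x t ^ 2 = 0 := (hx2 t).resolve_right ht
        have hmem : (5 / 12 : ℝ) ∈ Set.Icc (x t ^ 2) (x t₁ ^ 2) := by
          rw [ht', ht₁']; constructor <;> norm_num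
        obtain ⟨c, hc⟩ := intermediate_value_univ t t₁ hxc hmem
        have hc2 : x c ^ 2 = 5 / 12 := hc
        rcases hx2 c with h | h <;> rw [h] at hc2 <;> norm_num at hc2
      have hyz : ∀ t, y t = 0 := by
        intro t
        have hd : HasDerivAt (fun t => x t ^ 2) (2 * x t ^ 1 * y t) t := (hx t).pow 2
        have hcf : (fun t => x t ^ 2) = fun _ => (5 / 6 : ℝ) := funext hall
        rw [hcf] at hd
        have h2 : 2 * x t ^ 1 * y t = 0 := (hasDerivAt_const t _).unique hd |>.symm
        have hxt : x t ≠ 0 := by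
          intro hz
          have := hall t
          rw [hz] at this
          norm_num at this
        rw [pow_one] at h2
        rcases mul_eq_zero.mp h2 with h | h
        · exact absurd (by linarith : x t = 0) hxt
        · exact h
      refine ⟨hyz, ?_⟩
      have hdx : Differentiable ℝ x := fun t => (hx t).differentiableAt
      intro s u
      apply is_const_of_deriv_eq_zero hdx
      intro t
      rw [(hx t).deriv, hyz t]
  apply hne
  rw [hy0.2 t₀ s₀, hy0.1 t₀, hy0.1 s₀]
end
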